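/- arXiv:2010.04071 — 6 statements merged into one kernel-verified Lean document; each statement's English description precedes it below -/
import Mathlib

section
/- Let L ≥ 1 and let c_1, ..., c_L be positive integers. The PLRS {H_n} generated by the coefficients [c_1, ..., c_L] is complete if and only if either c_i = 1 for all 1 ≤ i ≤ L, or (c_i = 1 for all 1 ≤ i ≤ L−1 and c_L = 2). -/
/-- `H` (indexed from 1) is the Positive Linear Recurrence Sequence generated by the
coefficients `c 1, …, c L` (nonnegative integers with `L`, `c 1`, `c L` positive):
`H 1 = 1`, `H (n+1) = c 1 * H n + ⋯ + c n * H 1 + 1` for `1 ≤ n < L`, and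
`H (n+1) = c 1 * H n + ⋯ + c L * H (n+1-L)` for `n ≥ L`. -/
def IsPLRS (L : ℕ) (c : ℕ → ℕ) (H : ℕ → ℕ) : Prop :=
  0 < L ∧ 0 < c 1 ∧ 0 < c L ∧ H 1 = 1 ∧
  (∀ n, 1 ≤ n → n < L →
    H (n + 1) = (∑ j ∈ Finset.Icc 1 n, c j * H (n + 1 - j)) + 1) ∧
  (∀ n, L ≤ n →
    H (n + 1) = ∑ j ∈ Finset.Icc 1 L, c j * H (n + 1 - j))

/-- A sequence (indexed from 1) is complete if every positive integer is a sum of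
terms of the sequence over a finite set of distinct indices (each ≥ 1). -/
def SeqComplete (H : ℕ → ℕ) : Prop :=
  ∀ m : ℕ, 0 < m → ∃ S : Finset ℕ, (∀ i ∈ S, 1 ≤ i) ∧ m = ∑ i ∈ S, H i

/-- The `n`th Brown's gap of a sequence: `B_{H,n} = 1 + ∑_{i=1}^{n-1} H i − H n`. -/
def BrownGap (H : ℕ → ℕ) (n : ℕ) : ℤ :=
  1 + (∑ i ∈ Finset.Icc 1 (n - 1), (H i : ℤ)) - (H n : ℤ)

lemma sum_reflect (g : ℕ → ℕ) (k n : ℕ) (hk : k ≤ n) :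
    ∑ j ∈ Finset.Icc 1 k, g (n + 1 - j) = ∑ i ∈ Finset.Icc (n + 1 - k) n, g i := by
  refine Finset.sum_nbij' (fun j => n + 1 - j) (fun i => n + 1 - i) ?_ ?_ ?_ ?_ ?_ <;>
    simp only [Finset.mem_Icc] <;> intro a ha
  · omega
  · omega
  · omega
  · omega
  · trivial

lemma sum_split (g : ℕ → ℕ) (m n : ℕ) (h : m ≤ n) :
    ∑ i ∈ Finset.Icc 1 n, g i
      = (∑ i ∈ Finset.Icc 1 m, g i) + ∑ i ∈ Finset.Icc (m + 1) n, g i := by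
  rw [Finset.Icc_add_one_left_eq_Ioc, show (1:ℕ) = 0 + 1 from rfl, Finset.Icc_add_one_left_eq_Ioc, Finset.Icc_add_one_left_eq_Ioc,
    Finset.sum_Ioc_consecutive _ (Nat.zero_le m) h]

lemma plrs_pos {L : ℕ} {c H : ℕ → ℕ} (hH : IsPLRS L c H) :
    ∀ n, 1 ≤ n → 1 ≤ H n := by
  obtain ⟨hL, hc1, -, h1, hrec1, hrec2⟩ := hH
  intro n hn
  induction n with
  | zero => omega
  | succ n ih =>
    rcases Nat.eq_or_lt_of_le hn with h | h
    · rw [show n + 1 = 1 by omega, h1]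
    · have hn1 : 1 ≤ n := by omega
      have hHn := ih hn1
      rcases lt_or_ge n L with hnL | hnL
      · rw [hrec1 n hn1 hnL]; omega
      · rw [hrec2 n hnL]
        calc 1 ≤ c 1 * H (n + 1 - 1) := by
              simp only [Nat.add_sub_cancel]
              exact Nat.one_le_iff_ne_zero.mpr (by positivity)
        _ ≤ ∑ j ∈ Finset.Icc 1 L, c j * H (n + 1 - j) :=
              Finset.single_le_sum (f := fun j => c j * H (n + 1 - j))
                (fun i _ => Nat.zero_le _) (Finset.mem_Icc.mpr ⟨le_refl 1, hL⟩)

lemma plrs_mono {L : ℕ} {c H : ℕ → ℕ} (hH : IsPLRS L c H) :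
    ∀ a b, 1 ≤ a → a ≤ b → H a ≤ H b := by
  have hpos := plrs_pos hH
  obtain ⟨hL, hc1, -, h1, hrec1, hrec2⟩ := hH
  have step : ∀ n, 1 ≤ n → H n ≤ H (n + 1) := by
    intro n hn
    have key : c 1 * H (n + 1 - 1) ≤ ∑ j ∈ Finset.Icc 1 (min n L), c j * H (n + 1 - j) :=
      Finset.single_le_sum (f := fun j => c j * H (n + 1 - j))
        (fun i _ => Nat.zero_le _) (Finset.mem_Icc.mpr ⟨le_refl 1, by omega⟩)
    have hcn : H n ≤ c 1 * H (n + 1 - 1) := by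
      simp only [Nat.add_sub_cancel]
      calc H n = 1 * H n := (one_mul _).symm
      _ ≤ c 1 * H n := Nat.mul_le_mul_right _ hc1
    rcases lt_or_ge n L with hnL | hnL
    · rw [hrec1 n hn hnL]
      rw [min_eq_left (by omega)] at key
      omega
    · rw [hrec2 n hnL]
      rw [min_eq_right (by omega)] at key
      omega
  intro a b ha hab
  induction b with
  | zero => omega
  | succ b ih =>
    rcases Nat.eq_or_lt_of_le hab with h | h
    · rw [h]
    · exact (ih (by omega)).trans (step b (by omega))

lemma sum_prefix_one (c H : ℕ → ℕ) (k n : ℕ) (hk : 1 ≤ k) (hkn : k ≤ n)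
    (hpre : ∀ j, 1 ≤ j → j < k → c j = 1) :
    ∑ j ∈ Finset.Icc 1 k, c j * H (n + 1 - j)
      = (∑ i ∈ Finset.Icc (n + 2 - k) n, H i) + c k * H (n + 1 - k) := by
  obtain ⟨k, rfl⟩ : ∃ k', k = k' + 1 := ⟨k - 1, by omega⟩
  rw [Finset.sum_Icc_succ_top (by omega)]
  congr 1
  rw [Finset.sum_congr rfl (fun j hj => by
    have := Finset.mem_Icc.mp hj
    rw [hpre j this.1 (by omega), one_mul])]
  have h2 : n + 2 - (k + 1) = n + 1 - k := by omega
  rw [h2]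
  exact sum_reflect H k n (by omega)

lemma brown_complete (H : ℕ → ℕ) (h1 : H 1 = 1)
    (hpos : ∀ n, 1 ≤ n → 1 ≤ H n)
    (hB : ∀ n, H (n + 1) ≤ 1 + ∑ i ∈ Finset.Icc 1 n, H i) :
    SeqComplete H := by
  have claim : ∀ n m, m ≤ ∑ i ∈ Finset.Icc 1 n, H i →
      ∃ S : Finset ℕ, S ⊆ Finset.Icc 1 n ∧ m = ∑ i ∈ S, H i := by
    intro n
    induction n with
    | zero =>
      intro m hm
      simp at hm
      exact ⟨∅, by simp, by simp [hm]⟩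
    | succ n ih =>
      intro m hm
      by_cases h : m ≤ ∑ i ∈ Finset.Icc 1 n, H i
      · obtain ⟨S, hS, hm⟩ := ih m h
        exact ⟨S, hS.trans (Finset.Icc_subset_Icc_right (by omega)), hm⟩
      · push_neg at h
        have hge : H (n + 1) ≤ m := le_trans (hB n) (by omega)
        have hsum : ∑ i ∈ Finset.Icc 1 (n+1), H i
            = (∑ i ∈ Finset.Icc 1 n, H i) + H (n+1) :=
          Finset.sum_Icc_succ_top (by omega) _
        obtain ⟨S, hS, hmS⟩ := ih (m - H (n+1)) (by omega)
        have hnot : (n+1) ∉ S := by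
          intro hmem
          have := hS hmem
          simp [Finset.mem_Icc] at this
        refine ⟨insert (n+1) S, ?_, ?_⟩
        · intro x hx
          rcases Finset.mem_insert.mp hx with h | h
          · simp [h, Finset.mem_Icc]
          · have := Finset.mem_Icc.mp (hS h)
            simp [Finset.mem_Icc]
            omega
        · rw [Finset.sum_insert hnot, ← hmS]
          omega
  intro m hm
  have hmsum : m ≤ ∑ i ∈ Finset.Icc 1 m, H i := by
    calc m = ∑ i ∈ Finset.Icc 1 m, 1 := by simp
    _ ≤ ∑ i ∈ Finset.Icc 1 m, H i := by
        apply Finset.sum_le_sum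
        intro i hi
        exact hpos i (Finset.mem_Icc.mp hi).1
  obtain ⟨S, hS, hmS⟩ := claim m m hmsum
  exact ⟨S, fun i hi => (Finset.mem_Icc.mp (hS hi)).1, hmS⟩

lemma not_complete (H : ℕ → ℕ) (n : ℕ)
    (hmono : ∀ a b, 1 ≤ a → a ≤ b → H a ≤ H b)
    (hgap : 2 + ∑ i ∈ Finset.Icc 1 n, H i ≤ H (n + 1)) :
    ¬ SeqComplete H := by
  intro hcomp
  obtain ⟨S, hS1, hSm⟩ := hcomp (1 + ∑ i ∈ Finset.Icc 1 n, H i) (by positivity)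
  by_cases hsub : ∀ i ∈ S, i ≤ n
  · have hsub' : S ⊆ Finset.Icc 1 n := fun i hi =>
      Finset.mem_Icc.mpr ⟨hS1 i hi, hsub i hi⟩
    have := Finset.sum_le_sum_of_subset hsub' (f := H)
    omega
  · push_neg at hsub
    obtain ⟨j, hj, hjn⟩ := hsub
    have h2 : H (n+1) ≤ H j := hmono _ _ (by omega) (by omega)
    have h3 : H j ≤ ∑ i ∈ S, H i :=
      Finset.single_le_sum (fun i _ => Nat.zero_le _) hj
    omega

theorem stmt0 (L : ℕ) (hL : 1 ≤ L) (c H : ℕ → ℕ)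
    (hc : ∀ i, 1 ≤ i → i ≤ L → 0 < c i)
    (hH : IsPLRS L c H) :
    SeqComplete H ↔
      ((∀ i, 1 ≤ i → i ≤ L → c i = 1) ∨
       ((∀ i, 1 ≤ i → i ≤ L - 1 → c i = 1) ∧ c L = 2)) := by
  classical
  have hpos := plrs_pos hH
  have hmono := plrs_mono hH
  obtain ⟨hL0, hc1, hcL, h1, hrec1, hrec2⟩ := hH
  constructor
  · intro hcomp
    by_contra hnot
    push_neg at hnot
    obtain ⟨hA, hB⟩ := hnot
    have hex : ∃ i, 1 ≤ i ∧ i ≤ L ∧ 2 ≤ c i := by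
      obtain ⟨i, h1i, hiL, hne⟩ := hA
      exact ⟨i, h1i, hiL, by have := hc i h1i hiL; omega⟩
    set k := Nat.find hex with hkdef
    obtain ⟨hk1, hkL, hk2⟩ := Nat.find_spec hex
    rw [← hkdef] at hk1 hkL hk2
    have hpre : ∀ j, 1 ≤ j → j < k → c j = 1 := by
      intro j hj1 hjk
      have hm := Nat.find_min hex hjk
      push_neg at hm
      have h2 := hm hj1 (by omega)
      have := hc j hj1 (by omega)
      omega
    have hsplit := sum_split H 1 k hk1
    rw [Finset.Icc_self, Finset.sum_singleton, h1] at hsplit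
    norm_num at hsplit
    -- hsplit : ∑ Icc 1 k H = 1 + ∑ Icc 2 k H
    have e1 : k + 2 - k = 2 := by omega
    have e2 : k + 1 - k = 1 := by omega
    have hsum : ∑ j ∈ Finset.Icc 1 k, c j * H (k + 1 - j)
        = (∑ i ∈ Finset.Icc 2 k, H i) + c k := by
      rw [sum_prefix_one c H k k hk1 le_rfl hpre, e1, e2, h1, mul_one]
    rcases Nat.eq_or_lt_of_le hkL with hkL' | hklt
    · -- k = L, so all prefix ones; c L ≥ 3
      have hpre' : ∀ i, 1 ≤ i → i ≤ L - 1 → c i = 1 := fun i hi1 hi2 =>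
        hpre i hi1 (by omega)
      have hcL3 : 3 ≤ c k := by
        have h2 := hB hpre'
        rw [hkL'] at hk2 ⊢
        omega
      have hrec := hrec2 L le_rfl
      rw [← hkL', hsum] at hrec
      exact absurd hcomp (not_complete H k hmono (by omega))
    · have hrec := hrec1 k hk1 hklt
      rw [hsum] at hrec
      exact absurd hcomp (not_complete H k hmono (by omega))
  · intro hcond
    have hpre : ∀ j, 1 ≤ j → j < L → c j = 1 := by
      rcases hcond with hall | ⟨hpre', _⟩
      · exact fun j hj1 hjL => hall j hj1 (by omega)
      · exact fun j hj1 hjL => hpre' j hj1 (by omega)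
    have hcL2 : c L ≤ 2 := by
      rcases hcond with hall | ⟨_, h2⟩
      · rw [hall L hL le_rfl]; omega
      · omega
    apply brown_complete H h1 hpos
    intro n
    induction n using Nat.strong_induction_on with
    | _ n ih =>
    rcases Nat.eq_zero_or_pos n with rfl | hn
    · simp [h1]
    rcases lt_or_ge n L with hnL | hnL
    · rw [hrec1 n hn hnL,
        sum_prefix_one c H n n hn le_rfl (fun j hj1 hjn => hpre j hj1 (by omega))]
      have e1 : n + 2 - n = 2 := by omega
      have e2 : n + 1 - n = 1 := by omega
      rw [e1, e2, hpre n hn hnL, h1, mul_one]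
      have hsplit := sum_split H 1 n hn
      rw [Finset.Icc_self, Finset.sum_singleton, h1] at hsplit
      norm_num at hsplit
      omega
    · rw [hrec2 n hnL, sum_prefix_one c H L n hL hnL hpre]
      have e2 : n + 2 - L = n - L + 1 + 1 := by omega
      have e3 : n + 1 - L = n - L + 1 := by omega
      rw [e2, e3]
      have ihL := ih (n - L) (by omega)
      have hs1 := sum_split H (n - L) n (by omega)
      have hs2 := sum_split H (n - L + 1) n (by omega)
      have hs3 := sum_split H (n - L) (n - L + 1) (by omega)
      rw [Finset.Icc_self, Finset.sum_singleton] at hs3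
      have hcLH : c L * H (n - L + 1) ≤ 2 * H (n - L + 1) :=
        Nat.mul_le_mul_right _ hcL2
      omega
end

section
/- Let k ≥ 0 and N ≥ 1, and let {H_n} be the PLRS generated by the coefficients [1, 0, ..., 0, N] with k zeros between the initial 1 and the final coefficient N (so L = k + 2). Then {H_n} is complete if and only if 1 ≤ N ≤ ⌈(k+2)(k+3)/4⌉. -/
/-!
Brown's criterion: a sequence of positive terms is complete as soon as every term is at most one
more than the sum of the previous ones (subtract the last term that fits and recurse), while a
nondecreasing sequence with one term beyond that bound cannot represent `1 + H 1 + ⋯ + H (n - 1)`.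

For the coefficients `[1, 0, …, 0, N]` with `L = k + 2` the sequence is `H n = n` for `n ≤ L`
and `H (n + 1) = H n + N H (n + 1 - L)` afterwards. As `H (m + L) = L + N (H 1 + ⋯ + H m)`, the
Brown gaps `B n = 1 + H 1 + ⋯ + H (n - 1) - H n` obey `B (n + 1) = B n + N B (n + 1 - L) + L - N`,
with `2 B m = (m - 1)(m - 2)` for `m ≤ L`, so `2 B (L + 2) = L² + L + 2 - 4N`. If this is
nonnegative, all gaps are: for `N ≤ L` every increment is nonnegative, and for `N > L` every gap
from index `3` on except `B (L + 2)` is at least `1`, the only delicate index being `2L + 2`,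
where the possible deficit of `B (L + 2)` is paid for by `B (L + 1) ≥ 2`. Finally
`4N ≤ L² + L + 2` says `N ≤ ⌈L (L + 1) / 4⌉` because `L (L + 1)` is even.
-/

open Finset

section Brown

variable {H : ℕ → ℕ}

theorem brownGap_nonneg_iff (n : ℕ) :
    0 ≤ BrownGap H n ↔ H n ≤ 1 + ∑ i ∈ Icc 1 (n - 1), H i := by
  unfold BrownGap
  rw [← Nat.cast_sum]
  omega

theorem brownGap_succ {m : ℕ} (hm : 1 ≤ m) :
    BrownGap H (m + 1) = BrownGap H m + 2 * H m - H (m + 1) := by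
  obtain ⟨p, rfl⟩ : ∃ p, m = p + 1 := ⟨m - 1, by omega⟩
  simp only [BrownGap, Nat.add_sub_cancel, sum_Icc_succ_top (by omega : 1 ≤ p + 1)]
  ring

theorem exists_subset_sum_eq_of_brownGap_nonneg (hgap : ∀ n, 1 ≤ n → 0 ≤ BrownGap H n)
    (n : ℕ) : ∀ m ≤ ∑ i ∈ Icc 1 n, H i, ∃ T ⊆ Icc 1 n, m = ∑ i ∈ T, H i := by
  induction n with
  | zero => exact fun m hm => ⟨∅, empty_subset _, by simpa using hm⟩
  | succ n ih =>
    intro m hm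
    rw [sum_Icc_succ_top (by omega)] at hm
    have hIcc : Icc 1 n ⊆ Icc 1 (n + 1) := Icc_subset_Icc_right (by omega)
    by_cases hsmall : m ≤ ∑ i ∈ Icc 1 n, H i
    · obtain ⟨T, hT, hsum⟩ := ih m hsmall
      exact ⟨T, hT.trans hIcc, hsum⟩
    · have hlast : H (n + 1) ≤ 1 + ∑ i ∈ Icc 1 n, H i :=
        (brownGap_nonneg_iff (n + 1)).1 (hgap (n + 1) (by omega))
      obtain ⟨T, hT, hsum⟩ := ih (m - H (n + 1)) (by omega)
      have hnotin : n + 1 ∉ T := fun hn => by simpa using hT hn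
      refine ⟨insert (n + 1) T, insert_subset (by simp) (hT.trans hIcc), ?_⟩
      rw [sum_insert hnotin]
      omega

theorem seqComplete_of_brownGap_nonneg (hpos : ∀ n, 1 ≤ n → 1 ≤ H n)
    (hgap : ∀ n, 1 ≤ n → 0 ≤ BrownGap H n) : SeqComplete H := by
  intro m _
  have hm : m ≤ ∑ i ∈ Icc 1 m, H i := by
    simpa using card_nsmul_le_sum (Icc 1 m) H 1 fun i hi => hpos i (mem_Icc.1 hi).1
  obtain ⟨T, hT, hsum⟩ := exists_subset_sum_eq_of_brownGap_nonneg hgap m m hm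
  exact ⟨T, fun i hi => (mem_Icc.1 (hT hi)).1, hsum⟩

theorem not_seqComplete_of_brownGap_neg {n : ℕ} (hmono : ∀ j, n ≤ j → H n ≤ H j)
    (hgap : BrownGap H n < 0) : ¬ SeqComplete H := by
  have hlt : 1 + ∑ i ∈ Icc 1 (n - 1), H i < H n :=
    not_le.1 <| (brownGap_nonneg_iff n).not.1 hgap.not_ge
  intro hc
  obtain ⟨T, hT1, hsum⟩ := hc (1 + ∑ i ∈ Icc 1 (n - 1), H i) (by omega)
  by_cases hsub : T ⊆ Icc 1 (n - 1)
  · have := sum_le_sum_of_subset (f := H) hsub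
    omega
  · obtain ⟨j, hjT, hj⟩ := not_subset.1 hsub
    have hnj : n ≤ j := by
      have := hT1 j hjT
      rw [mem_Icc] at hj
      omega
    have := single_le_sum (fun i _ => Nat.zero_le (H i)) hjT
    have := hmono j hnj
    omega

end Brown

/-- The PLRS with coefficients `[1, 0, …, 0, N]` of length `L`, in closed form. -/
structure IsLaggedFibonacci (L N : ℕ) (H : ℕ → ℕ) : Prop where
  two_le : 2 ≤ L
  eq_self : ∀ n, 1 ≤ n → n ≤ L → H n = n
  succ_eq : ∀ n, L ≤ n → H (n + 1) = H n + N * H (n + 1 - L)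

theorem sum_Icc_ite_mul_eq {k N n : ℕ} (hn : 1 ≤ n) (hnk : n < k + 2) (f : ℕ → ℕ) :
    ∑ j ∈ Icc 1 n, (if j = 1 then 1 else if j = k + 2 then N else 0) * f j = f 1 := by
  rw [sum_eq_single_of_mem 1 (mem_Icc.2 ⟨le_rfl, hn⟩)]
  · simp
  · intro j hj hj1
    have hjk : j ≠ k + 2 := by
      have := (mem_Icc.1 hj).2
      omega
    simp [hj1, hjk]

theorem isLaggedFibonacci_of_isPLRS {k N : ℕ} {H : ℕ → ℕ}
    (hH : IsPLRS (k + 2) (fun i => if i = 1 then 1 else if i = k + 2 then N else 0) H) :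
    IsLaggedFibonacci (k + 2) N H := by
  obtain ⟨-, -, -, h1, hinit, hrec⟩ := hH
  refine ⟨by omega, fun n hn hnL => ?_, fun n hn => ?_⟩
  · induction n, hn using Nat.le_induction with
    | base => exact h1
    | succ n hn ih =>
      rw [hinit n hn (by omega), sum_Icc_ite_mul_eq hn (by omega), Nat.add_sub_cancel,
        ih (by omega)]
  · rw [hrec n hn, sum_Icc_succ_top (by omega), sum_Icc_ite_mul_eq (by omega) (by omega)]
    simp

namespace IsLaggedFibonacci

variable {L N : ℕ} {H : ℕ → ℕ} (h : IsLaggedFibonacci L N H)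
include h

theorem monotoneOn : MonotoneOn H (Set.Ici 1) := by
  refine monotoneOn_nat_Ici_of_le_succ fun n hn => ?_
  by_cases hnL : n < L
  · rw [h.eq_self n hn (by omega), h.eq_self (n + 1) (by omega) hnL]
    omega
  · rw [h.succ_eq n (by omega)]
    omega

theorem one_le {n : ℕ} (hn : 1 ≤ n) : 1 ≤ H n := by
  have := h.monotoneOn (Set.mem_Ici.2 le_rfl) (Set.mem_Ici.2 hn) hn
  rwa [h.eq_self 1 le_rfl (by have := h.two_le; omega)] at this

theorem add_eq_sum (m : ℕ) : H (m + L) = L + N * ∑ i ∈ Icc 1 m, H i := by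
  have hL := h.two_le
  induction m with
  | zero => simpa using h.eq_self L (by omega) le_rfl
  | succ m ih =>
    have hsucc := h.succ_eq (m + L) (by omega)
    rw [show m + L + 1 - L = m + 1 by omega, show m + L + 1 = m + 1 + L by omega] at hsucc
    rw [hsucc, ih, sum_Icc_succ_top (by omega)]
    ring

theorem two_mul_brownGap_of_le {m : ℕ} (hm : 1 ≤ m) (hmL : m ≤ L) :
    2 * BrownGap H m = ((m : ℤ) - 1) * (m - 2) := by
  induction m, hm using Nat.le_induction with
  | base => simp [BrownGap, h.eq_self 1 le_rfl hmL]
  | succ m hm ih =>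
    rw [brownGap_succ hm, h.eq_self m hm (by omega), h.eq_self (m + 1) (by omega) hmL]
    push_cast
    linear_combination ih (by omega)

theorem brownGap_one : BrownGap H 1 = 0 := by
  simpa using h.two_mul_brownGap_of_le le_rfl (by have := h.two_le; omega)

theorem brownGap_two : BrownGap H 2 = 0 := by
  simpa using h.two_mul_brownGap_of_le (by omega) h.two_le

theorem brownGap_add_succ (j : ℕ) :
    BrownGap H (j + L + 1) = BrownGap H (j + L) + N * BrownGap H (j + 1) + L - N := by
  have hsucc := h.succ_eq (j + L) (by omega)
  rw [show j + L + 1 - L = j + 1 by omega] at hsucc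
  rw [brownGap_succ (by have := h.two_le; omega), hsucc, h.add_eq_sum]
  simp only [BrownGap, Nat.add_sub_cancel]
  push_cast
  ring

theorem two_mul_brownGap_add_one : 2 * BrownGap H (L + 1) = (L : ℤ) * L - L + 2 - 2 * N := by
  have hrec := h.brownGap_add_succ 0
  rw [zero_add, zero_add, h.brownGap_one] at hrec
  rw [hrec]
  linear_combination h.two_mul_brownGap_of_le (by have := h.two_le; omega) le_rfl

theorem two_mul_brownGap_add_two : 2 * BrownGap H (L + 2) = (L : ℤ) * L + L + 2 - 4 * N := by
  have hrec := h.brownGap_add_succ 1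
  rw [add_comm 1 L, h.brownGap_two] at hrec
  rw [hrec]
  linear_combination h.two_mul_brownGap_add_one

theorem brownGap_nonneg_of_le (hNL : N ≤ L) : ∀ m, 1 ≤ m → 0 ≤ BrownGap H m := by
  intro m
  induction m using Nat.strong_induction_on with
  | _ m ih =>
    intro hm
    by_cases hmL : m ≤ L
    · have hB := h.two_mul_brownGap_of_le hm hmL
      rcases eq_or_lt_of_le hm with rfl | hm2
      · exact h.brownGap_one.ge
      · have : (2 : ℤ) ≤ m := by exact_mod_cast hm2
        nlinarith
    · obtain ⟨j, rfl⟩ : ∃ j, m = j + L + 1 := ⟨m - L - 1, by omega⟩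
      have hL := h.two_le
      rw [h.brownGap_add_succ]
      have := ih (j + L) (by omega) (by omega)
      have := mul_nonneg (Nat.cast_nonneg N) (ih (j + 1) (by omega) (by omega))
      have : (N : ℤ) ≤ L := by exact_mod_cast hNL
      linarith

theorem one_le_brownGap_of_lt (hLN : L < N) (hN : 4 * N ≤ L * L + L + 2) :
    ∀ m, 3 ≤ m → m ≠ L + 2 → 1 ≤ BrownGap H m := by
  have hL4 : 4 ≤ L := by nlinarith
  have hL : (4 : ℤ) ≤ L := by exact_mod_cast hL4
  have hNz : (4 : ℤ) * N ≤ L * L + L + 2 := by exact_mod_cast hN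
  have hL1 : 2 ≤ BrownGap H (L + 1) := by
    have := h.two_mul_brownGap_add_one
    nlinarith
  have hL2 : 0 ≤ BrownGap H (L + 2) := by
    have := h.two_mul_brownGap_add_two
    linarith
  intro m
  induction m using Nat.strong_induction_on with
  | _ m ih =>
    intro hm3 hmL2
    rcases lt_trichotomy m (L + 1) with hlt | rfl | hgt
    · have := h.two_mul_brownGap_of_le (m := m) (by omega) (by omega)
      have : (3 : ℤ) ≤ m := by exact_mod_cast hm3
      nlinarith
    · linarith
    obtain ⟨j, rfl⟩ : ∃ j, m = j + L + 1 := ⟨m - L - 1, by omega⟩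
    rw [h.brownGap_add_succ]
    by_cases hj : j = L + 1
    · -- `B (L + 2)` may vanish here, so unfold one more step to reach `B (L + 1) ≥ 2`.
      subst hj
      rw [show L + 1 + L = L + L + 1 by omega, h.brownGap_add_succ L]
      have := ih (L + L) (by omega) (by omega) (by omega)
      nlinarith
    · have hprev : 0 ≤ BrownGap H (j + L) := by
        rcases eq_or_ne (j + L) (L + 2) with e | e
        · rwa [e]
        · linarith [ih (j + L) (by omega) (by omega) e]
      have := ih (j + 1) (by omega) (by omega) (by omega)
      nlinarith

theorem brownGap_nonneg (hN : 4 * N ≤ L * L + L + 2) : ∀ m, 1 ≤ m → 0 ≤ BrownGap H m := by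
  intro m hm
  rcases le_or_gt N L with hNL | hLN
  · exact h.brownGap_nonneg_of_le hNL m hm
  rcases (show m = 1 ∨ m = 2 ∨ m = L + 2 ∨ (3 ≤ m ∧ m ≠ L + 2) by omega)
    with rfl | rfl | rfl | ⟨hm3, hmL2⟩
  · exact h.brownGap_one.ge
  · exact h.brownGap_two.ge
  · have := h.two_mul_brownGap_add_two
    have : (4 : ℤ) * N ≤ L * L + L + 2 := by exact_mod_cast hN
    linarith
  · exact zero_le_one.trans (h.one_le_brownGap_of_lt hLN hN m hm3 hmL2)

theorem seqComplete_iff : SeqComplete H ↔ 4 * N ≤ L * L + L + 2 := by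
  refine ⟨fun hc => ?_, fun hN => seqComplete_of_brownGap_nonneg (fun _ => h.one_le)
    (h.brownGap_nonneg hN)⟩
  by_contra hN
  have hlt : (L : ℤ) * L + L + 2 < 4 * N := by exact_mod_cast not_le.1 hN
  refine not_seqComplete_of_brownGap_neg (n := L + 2)
    (fun j hj => h.monotoneOn (Set.mem_Ici.2 (by omega)) (Set.mem_Ici.2 (by omega)) hj) ?_ hc
  linarith [h.two_mul_brownGap_add_two]

end IsLaggedFibonacci

theorem le_ceil_div_four_iff {a : ℕ} (ha : Even a) (N : ℕ) :
    (N : ℤ) ≤ ⌈(a : ℚ) / 4⌉ ↔ 4 * N ≤ a + 2 := by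
  obtain ⟨t, rfl⟩ := ha
  rw [Int.le_ceil_iff, lt_div_iff₀ four_pos]
  exact_mod_cast (show ((N : ℤ) - 1) * 4 < ((t + t : ℕ) : ℤ) ↔ 4 * N ≤ t + t + 2 by omega)

theorem stmt4_general (k N : ℕ) (H : ℕ → ℕ)
    (hH : IsPLRS (k + 2) (fun i => if i = 1 then 1 else if i = k + 2 then N else 0) H) :
    SeqComplete H ↔
      (1 ≤ N ∧ (N : ℤ) ≤ ⌈(((k : ℚ) + 2) * ((k : ℚ) + 3)) / 4⌉) := by
  have hN : 0 < N := by simpa using hH.2.2.1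
  have hcast : ((k : ℚ) + 2) * ((k : ℚ) + 3) = (((k + 2) * (k + 3) : ℕ) : ℚ) := by
    push_cast
    ring
  rw [(isLaggedFibonacci_of_isPLRS hH).seqComplete_iff, hcast,
    le_ceil_div_four_iff (Nat.even_mul_succ_self (k + 2)), and_iff_right (Nat.succ_le_of_lt hN)]
  ring_nf

theorem stmt4 (k N : ℕ) (hN : 1 ≤ N) (H : ℕ → ℕ)
    (hH : IsPLRS (k + 2) (fun i => if i = 1 then 1 else if i = k + 2 then N else 0) H) :
    SeqComplete H ↔
      (1 ≤ N ∧ (N : ℤ) ≤ ⌈(((k : ℚ) + 2) * ((k : ℚ) + 3)) / 4⌉) :=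
  stmt4_general k N H hH
end

section
/- Let g, k ≥ 1 with g ≥ k + ⌈log₂ k⌉, let N ≥ 1, and let {H_n} be the PLRS generated by the coefficients [1, ..., 1, 0, ..., 0, N] consisting of g ones, then k zeros, then N (so L = g + k + 1). Then {H_n} is complete if and only if 1 ≤ N ≤ 2^{k+1} − 1. -/
/-!
By Brown's criterion, a nondecreasing sequence with `H 1 = 1` is complete iff
`H (n + 1) ≤ 1 + H 1 + ⋯ + H n` for all `n`. Beyond the initial conditions the recurrence turns this
into `N * H p ≤ 1 + H 1 + ⋯ + H (p + k)` for all `p ≥ 1`. Since `H 1, …, H (g + 1)` are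
`1, 2, …, 2 ^ g`, the choice `p = g - k + 2` forces `N < 2 ^ (k + 1)`. Conversely
`(2 ^ (k + 1) - 1) * H p ≤ H 1 + ⋯ + H (p + k)` for every `p ≥ 1`: the increments of the difference
satisfy the recurrence of `H` itself up to inhomogeneous terms that are nonnegative except at one
index, where the preceding increments absorb the deficit; on the initial segment they are
nonnegative exactly because `k ≤ 2 ^ (g - k)`, which is what `g ≥ k + ⌈log₂ k⌉` provides.
-/

open Finset

lemma seqComplete_of_succ_le_one_add_sum {H : ℕ → ℕ} (hpos : ∀ n, 0 < H (n + 1))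
    (hbrown : ∀ n, H (n + 1) ≤ 1 + ∑ i ∈ Ioc 0 n, H i) : SeqComplete H := by
  have subset_sum : ∀ n m, m ≤ ∑ i ∈ Ioc 0 n, H i → ∃ T ⊆ Ioc 0 n, m = ∑ i ∈ T, H i := by
    intro n
    induction n with
    | zero => exact fun m hm => ⟨∅, empty_subset _, by simpa using hm⟩
    | succ n ih =>
      intro m hm
      rw [sum_Ioc_succ_top n.zero_le] at hm
      have hsub : Ioc 0 n ⊆ Ioc 0 (n + 1) := Ioc_subset_Ioc_right n.le_succ
      by_cases hmn : m ≤ ∑ i ∈ Ioc 0 n, H i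
      · obtain ⟨T, hT, hTm⟩ := ih m hmn
        exact ⟨T, hT.trans hsub, hTm⟩
      · have hle := hbrown n
        obtain ⟨T, hT, hTm⟩ := ih (m - H (n + 1)) (by omega)
        have hnT : n + 1 ∉ T := fun h => by simpa using hT h
        refine ⟨insert (n + 1) T, insert_subset (by simp) (hT.trans hsub), ?_⟩
        rw [sum_insert hnT, ← hTm]
        omega
  intro m _
  have hm : m ≤ ∑ i ∈ Ioc 0 m, H i := by
    calc m = ∑ _i ∈ Ioc 0 m, 1 := by simp
      _ ≤ ∑ i ∈ Ioc 0 m, H i := sum_le_sum fun i hi => by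
        obtain ⟨j, rfl⟩ := Nat.exists_eq_add_one.mpr (mem_Ioc.mp hi).1
        exact hpos j
  obtain ⟨T, hT, hTm⟩ := subset_sum m m hm
  exact ⟨T, fun i hi => (mem_Ioc.mp (hT hi)).1, hTm⟩

lemma not_seqComplete_of_one_add_sum_lt {H : ℕ → ℕ} (hmono : MonotoneOn H (Set.Ici 1)) {n : ℕ}
    (hgap : 1 + ∑ i ∈ Ioc 0 n, H i < H (n + 1)) : ¬ SeqComplete H := by
  intro hcomp
  obtain ⟨S, hS, hsum⟩ := hcomp (1 + ∑ i ∈ Ioc 0 n, H i) (by omega)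
  by_cases hSn : ∀ i ∈ S, i ≤ n
  · have := sum_le_sum_of_subset (f := H) fun i hi => mem_Ioc.mpr ⟨hS i hi, hSn i hi⟩
    omega
  · push Not at hSn
    obtain ⟨i, hi, hni⟩ := hSn
    have : H (n + 1) ≤ H i := hmono (Set.mem_Ici.mpr n.succ_pos) (Set.mem_Ici.mpr (hS i hi)) hni
    have := single_le_sum (fun j _ => (H j).zero_le) hi
    omega

lemma sum_Icc_filter_le_reflect {M : Type*} [AddCommMonoid M] (f : ℕ → M) {g b n : ℕ}
    (hbn : b ≤ n) (hgb : min g n ≤ b) :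
    ∑ j ∈ Icc 1 b with j ≤ g, f (n + 1 - j) = ∑ i ∈ Ioc (n - g) n, f i := by
  apply sum_nbij' (fun j => n + 1 - j) (fun i => n + 1 - i)
  all_goals intro x hx
  all_goals simp only [mem_filter, mem_Icc, mem_Ioc] at hx ⊢
  all_goals omega

lemma sum_Ioc_slide {M : Type*} [AddCommMonoid M] (f : ℕ → M) {g n : ℕ} (hgn : g ≤ n) :
    ∑ i ∈ Ioc (n + 1 - g) (n + 1), f i + f (n + 1 - g) = ∑ i ∈ Ioc (n - g) n, f i + f (n + 1) := by
  rw [← sum_Ioc_succ_top (by omega), ← sum_Ioc_consecutive _ (show n - g ≤ n + 1 - g by omega)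
    (by omega), show n + 1 - g = n - g + 1 by omega, sum_Ioc_succ_top le_rfl, Ioc_self,
    sum_empty, zero_add, add_comm]

-- The increment at `m` of `∑ i ∈ Ioc 0 (m + k), H i - (2 ^ (k + 1) - 1) * H m`.
def slackStep (k : ℕ) (H : ℕ → ℕ) (m : ℕ) : ℤ :=
  H (m + k + 1) - (2 ^ (k + 1) - 1) * ((H (m + 1) : ℤ) - H m)

lemma sum_Ico_slackStep (k : ℕ) (H : ℕ → ℕ) (g m : ℕ) :
    ∑ i ∈ Ico (m - g) m, slackStep k H i
      = ∑ i ∈ Ioc (m - g + k) (m + k), (H i : ℤ) - (2 ^ (k + 1) - 1) * ((H m : ℤ) - H (m - g)) := by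
  have hshift := sum_Ico_add' (fun i => (H i : ℤ)) (m - g) m (k + 1)
  simp only [← add_assoc, Ico_add_one_add_one_eq_Ioc] at hshift
  simp only [slackStep]
  rw [sum_sub_distrib, ← mul_sum, sum_Ico_sub (fun i => (H i : ℤ)) (Nat.sub_le m g), hshift]

/-- The PLRS generated by `[1, …, 1, 0, …, 0, N]`, with `g` ones and `k` zeros. -/
def IsGapPLRS (g k N : ℕ) (H : ℕ → ℕ) : Prop :=
  IsPLRS (g + k + 1) (fun i => if i ≤ g then 1 else if i = g + k + 1 then N else 0) H

namespace IsGapPLRS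

variable {g k N : ℕ} {H : ℕ → ℕ}

lemma apply_one (hH : IsGapPLRS g k N H) : H 1 = 1 :=
  hH.2.2.2.1

lemma succ_eq_of_lt (hH : IsGapPLRS g k N H) {n : ℕ} (hn : n < g + k + 1) :
    H (n + 1) = ∑ i ∈ Ioc (n - g) n, H i + 1 := by
  obtain ⟨-, -, -, h1, hlt, -⟩ := hH
  rcases Nat.eq_zero_or_pos n with rfl | hn0
  · simp [h1]
  rw [hlt n hn0 hn, ← sum_Icc_filter_le_reflect H le_rfl (min_le_right g n), sum_filter]
  congr 1
  refine sum_congr rfl fun j hj => ?_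
  have := (mem_Icc.mp hj).2
  dsimp only
  split_ifs <;> omega

lemma succ_eq_of_le (hH : IsGapPLRS g k N H) {n : ℕ} (hn : g + k + 1 ≤ n) :
    H (n + 1) = ∑ i ∈ Ioc (n - g) n, H i + N * H (n - g - k) := by
  obtain ⟨-, -, -, -, -, hge⟩ := hH
  have hcoeff : ∀ j ∈ Icc 1 (g + k + 1),
      (if j ≤ g then 1 else if j = g + k + 1 then N else 0) * H (n + 1 - j)
        = (if j ≤ g then H (n + 1 - j) else 0) + if j = g + k + 1 then N * H (n + 1 - j) else 0 :=
    fun j _ => by split_ifs <;> omega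
  rw [hge n hn, sum_congr rfl hcoeff, sum_add_distrib, ← sum_filter, sum_ite_eq',
    if_pos (right_mem_Icc.mpr (by omega)), sum_Icc_filter_le_reflect H hn (by omega),
    show n + 1 - (g + k + 1) = n - g - k by omega]

lemma le_succ (hH : IsGapPLRS g k N H) (hg : 1 ≤ g) {n : ℕ} (hn : 1 ≤ n) : H n ≤ H (n + 1) := by
  have hwin : H n ≤ ∑ i ∈ Ioc (n - g) n, H i :=
    single_le_sum (fun i _ => (H i).zero_le) (mem_Ioc.mpr ⟨by omega, le_rfl⟩)
  rcases lt_or_ge n (g + k + 1) with hn' | hn'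
  · rw [hH.succ_eq_of_lt hn']; omega
  · rw [hH.succ_eq_of_le hn']; omega

lemma monotoneOn (hH : IsGapPLRS g k N H) (hg : 1 ≤ g) : MonotoneOn H (Set.Ici 1) :=
  monotoneOn_nat_Ici_of_le_succ fun _ hn => hH.le_succ hg hn

lemma pos (hH : IsGapPLRS g k N H) (hg : 1 ≤ g) (n : ℕ) : 0 < H (n + 1) := by
  have h1 := hH.apply_one
  have : H 1 ≤ H (n + 1) :=
    hH.monotoneOn hg (Set.mem_Ici.mpr le_rfl) (Set.mem_Ici.mpr n.succ_pos) (by omega)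
  omega

lemma sum_add_one_eq_two_pow (hH : IsGapPLRS g k N H) {n : ℕ} (hn : n ≤ g + 1) :
    ∑ i ∈ Ioc 0 n, H i + 1 = 2 ^ n := by
  induction n with
  | zero => simp
  | succ n ih =>
    rw [sum_Ioc_succ_top n.zero_le, hH.succ_eq_of_lt (by omega), Nat.sub_eq_zero_of_le (by omega),
      pow_succ, ← ih (by omega)]
    ring

lemma succ_eq_two_pow (hH : IsGapPLRS g k N H) {n : ℕ} (hn : n ≤ g) : H (n + 1) = 2 ^ n := by
  have := hH.sum_add_one_eq_two_pow (n := n) (by omega)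
  rw [hH.succ_eq_of_lt (by omega), Nat.sub_eq_zero_of_le hn, this]

lemma two_mul_eq_add (hH : IsGapPLRS g k N H) {n : ℕ} (hgn : g ≤ n) (hn : n + 1 < g + k + 1) :
    2 * H (n + 1) = H (n + 2) + H (n + 1 - g) := by
  have hshift := sum_Ioc_slide H hgn
  have hsucc := hH.succ_eq_of_lt (n := n) (by omega)
  have hsucc2 : H (n + 2) = _ := hH.succ_eq_of_lt (n := n + 1) hn
  omega

lemma add_mul_two_pow (hH : IsGapPLRS g k N H) (hkg : k ≤ g) {t : ℕ} (ht : t < k) :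
    H (g + 2 + t) + (t + 1) * 2 ^ t = 2 ^ (g + 1 + t) := by
  induction t with
  | zero =>
    simp only [add_zero, zero_add, pow_zero, mul_one]
    have hsum := hH.sum_add_one_eq_two_pow (n := g + 1) le_rfl
    rw [← sum_Ioc_consecutive _ (show 0 ≤ 1 by omega) (show 1 ≤ g + 1 by omega),
      sum_Ioc_succ_top le_rfl, Ioc_self, sum_empty, hH.apply_one] at hsum
    rw [hH.succ_eq_of_lt (n := g + 1) (by omega), show g + 1 - g = 1 by omega]
    omega
  | succ t ih =>
    have hdbl := hH.two_mul_eq_add (n := g + 1 + t) (by omega) (by omega)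
    rw [show g + 1 + t + 1 - g = t + 1 + 1 by omega, hH.succ_eq_two_pow (n := t + 1) (by omega),
      show g + 1 + t + 1 = g + 2 + t by omega] at hdbl
    have := ih (by omega)
    rw [show g + 2 + (t + 1) = g + 1 + t + 2 by omega, show g + 1 + (t + 1) = g + 1 + t + 1 by omega,
      pow_succ, pow_succ]
    rw [pow_succ] at hdbl
    linarith

lemma slackStep_eq_of_le_of_le (hH : IsGapPLRS g k N H) {m : ℕ} (hgm : g + 1 ≤ m) (hmk : m ≤ g + k) :
    slackStep k H m = ∑ i ∈ Ico (m - g) m, slackStep k H i + N * H (m - g) := by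
  have hfull := hH.succ_eq_of_le (n := m + k) (by omega)
  rw [show m + k - g = m - g + k by omega, show m - g + k - k = m - g by omega] at hfull
  have hdbl := hH.two_mul_eq_add (n := m - 1) (by omega) (by omega)
  rw [show m - 1 + 1 = m by omega, show m - 1 + 2 = m + 1 by omega] at hdbl
  rw [sum_Ico_slackStep, slackStep]
  zify at hfull hdbl
  linear_combination hfull + (2 ^ (k + 1) - 1 : ℤ) * hdbl

lemma slackStep_gap (hH : IsGapPLRS g k N H) (hkg : k ≤ g) :
    slackStep k H (g + k + 1) = ∑ i ∈ Ico (k + 1) (g + k + 1), slackStep k H i + N * 2 ^ k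
      - (2 ^ (k + 1) - 1) * (N - 1) := by
  have hfar := hH.succ_eq_of_le (n := g + k + 1 + k) (by omega)
  have hnext := hH.succ_eq_of_le (n := g + k + 1) le_rfl
  have hlast := hH.succ_eq_of_lt (n := g + k) (by omega)
  have hshift := sum_Ioc_slide H (show g ≤ g + k by omega)
  have hpow := hH.succ_eq_two_pow hkg
  have h1 := hH.apply_one
  have hsum := sum_Ico_slackStep k H g (g + k + 1)
  simp only [show g + k + 1 + k - g = k + 1 + k by omega, show k + 1 + k - k = k + 1 by omega,
    show g + k + 1 - g = k + 1 by omega, show k + 1 - k = 1 by omega,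
    show g + k - g = k by omega, h1] at hfar hnext hshift hlast hsum
  rw [hsum, slackStep]
  zify at hfar hnext hlast hshift hpow
  linear_combination hfar + (N : ℤ) * hpow - (2 ^ (k + 1) - 1 : ℤ) * (hnext - hlast + hshift)

lemma slackStep_eq_of_ge (hH : IsGapPLRS g k N H) {m : ℕ} (hm : g + k + 2 ≤ m) :
    slackStep k H m = ∑ i ∈ Ico (m - g) m, slackStep k H i + N * slackStep k H (m - g - k - 1) := by
  have hfar := hH.succ_eq_of_le (n := m + k) (by omega)
  have hnext := hH.succ_eq_of_le (n := m) (by omega)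
  have hlast := hH.succ_eq_of_le (n := m - 1) (by omega)
  have hshift := sum_Ioc_slide H (show g ≤ m - 1 by omega)
  simp only [show m + k - g = m - g + k by omega, show m - g + k - k = m - g by omega,
    show m - 1 + 1 = m by omega,
    show m - 1 - g - k = m - g - k - 1 by omega] at hfar hnext hlast hshift
  rw [sum_Ico_slackStep, slackStep, slackStep, show m - g - k - 1 + k + 1 = m - g by omega,
    show m - g - k - 1 + 1 = m - g - k by omega]
  zify at hfar hnext hlast hshift
  linear_combination hfar - (2 ^ (k + 1) - 1 : ℤ) * (hnext - hlast + hshift)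

lemma two_pow_le_add (hH : IsGapPLRS g k N H) (hkg : k ≤ g) (hk2 : k ≤ 2 ^ (g - k)) {s : ℕ}
    (hs : s < g) : 2 ^ (s + k + 1) ≤ H (s + k + 2) + 2 ^ s := by
  by_cases hsk : s + k + 1 ≤ g
  · rw [hH.succ_eq_two_pow hsk]
    exact Nat.le_add_right _ _
  obtain ⟨t, rfl⟩ : ∃ t, s = g - k + t := ⟨s - (g - k), by omega⟩
  have hmid := hH.add_mul_two_pow hkg (t := t) (by omega)
  rw [show g + 2 + t = g - k + t + k + 2 by omega,
    show g + 1 + t = g - k + t + k + 1 by omega] at hmid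
  have : (t + 1) * 2 ^ t ≤ 2 ^ (g - k + t) := by
    rw [pow_add]
    exact Nat.mul_le_mul_right _ (by omega)
  omega

lemma slackStep_nonneg_of_le (hH : IsGapPLRS g k N H) (hkg : k ≤ g) (hk2 : k ≤ 2 ^ (g - k))
    {m : ℕ} (hm : 1 ≤ m) (hmg : m ≤ g) : 0 ≤ slackStep k H m := by
  obtain ⟨s, rfl⟩ : ∃ s, m = s + 1 := ⟨m - 1, by omega⟩
  have hle := hH.two_pow_le_add hkg hk2 (s := s) (by omega)
  rw [slackStep, show s + 1 + k + 1 = s + k + 2 by omega, hH.succ_eq_two_pow (n := s + 1) hmg,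
    hH.succ_eq_two_pow (n := s) (by omega)]
  zify at hle
  have : (2 ^ (k + 1) - 1 : ℤ) * (2 ^ (s + 1) - 2 ^ s) = 2 ^ (s + k + 1) - 2 ^ s := by ring
  push_cast
  linarith

lemma slackStep_gap_nonneg (hH : IsGapPLRS g k N H) (hkg : k ≤ g)
    (hprev : ∀ i, 1 ≤ i → i < g + k + 1 → 0 ≤ slackStep k H i) : 0 ≤ slackStep k H (g + k + 1) := by
  have hlow : 0 ≤ ∑ i ∈ Ico (k + 1) (g + 1), slackStep k H i :=
    sum_nonneg fun i hi => hprev i (by rw [mem_Ico] at hi; omega) (by rw [mem_Ico] at hi; omega)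
  have hmid : ∑ i ∈ Ico (g + 1) (g + k + 1), (N : ℤ) * H (i - g)
      ≤ ∑ i ∈ Ico (g + 1) (g + k + 1), slackStep k H i := by
    refine sum_le_sum fun i hi => ?_
    rw [mem_Ico] at hi
    rw [hH.slackStep_eq_of_le_of_le hi.1 (by omega), le_add_iff_nonneg_left]
    exact sum_nonneg fun j hj => hprev j (by rw [mem_Ico] at hj; omega) (by rw [mem_Ico] at hj; omega)
  have hreindex : ∑ i ∈ Ico (g + 1) (g + k + 1), (H (i - g) : ℤ) = ∑ i ∈ Ioc 0 k, (H i : ℤ) := by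
    apply sum_nbij' (· - g) (· + g)
    all_goals intro i hi
    all_goals simp only [mem_Ico, mem_Ioc] at hi ⊢
    all_goals omega
  have hpow := hH.sum_add_one_eq_two_pow (n := k) (by omega)
  zify at hpow
  rw [← mul_sum, hreindex, show ∑ i ∈ Ioc 0 k, (H i : ℤ) = 2 ^ k - 1 by linarith] at hmid
  rw [hH.slackStep_gap hkg, ← sum_Ico_consecutive _ (show k + 1 ≤ g + 1 by omega) (by omega)]
  have : (1 : ℤ) ≤ 2 ^ k := one_le_pow₀ (by norm_num)
  rw [pow_succ]
  linarith

lemma slackStep_nonneg (hH : IsGapPLRS g k N H) (hkg : k ≤ g) (hk2 : k ≤ 2 ^ (g - k)) :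
    ∀ m, 1 ≤ m → 0 ≤ slackStep k H m := by
  intro m
  induction m using Nat.strong_induction_on with
  | _ m ih =>
  intro hm
  rcases le_or_gt m g with hmg | hgm
  · exact hH.slackStep_nonneg_of_le hkg hk2 hm hmg
  have hwindow : 0 ≤ ∑ i ∈ Ico (m - g) m, slackStep k H i :=
    sum_nonneg fun i hi => ih i (mem_Ico.mp hi).2 (by rw [mem_Ico] at hi; omega)
  rcases le_or_gt m (g + k) with hmk | hkm
  · rw [hH.slackStep_eq_of_le_of_le hgm hmk]
    positivity
  rcases eq_or_lt_of_le (Nat.succ_le_of_lt hkm) with rfl | hm'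
  · exact hH.slackStep_gap_nonneg hkg fun i hi1 hi2 => ih i hi2 hi1
  · rw [hH.slackStep_eq_of_ge hm']
    exact add_nonneg hwindow (mul_nonneg (by positivity) (ih _ (by omega) (by omega)))

lemma mul_le_sum (hH : IsGapPLRS g k N H) (hkg : k ≤ g) (hk2 : k ≤ 2 ^ (g - k)) {m : ℕ}
    (hm : 1 ≤ m) : (2 ^ (k + 1) - 1) * H m ≤ ∑ i ∈ Ioc 0 (m + k), H i := by
  induction m, hm using Nat.le_induction with
  | base =>
    have := hH.sum_add_one_eq_two_pow (n := k + 1) (by omega)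
    rw [hH.apply_one, add_comm 1 k]
    omega
  | succ m hm ih =>
    have hstep := hH.slackStep_nonneg hkg hk2 m hm
    rw [slackStep] at hstep
    rw [show m + 1 + k = m + k + 1 by omega, sum_Ioc_succ_top (by omega)]
    have : 1 ≤ 2 ^ (k + 1) := Nat.one_le_two_pow
    zify [this] at ih ⊢
    linarith

lemma succ_add_sum (hH : IsGapPLRS g k N H) {p : ℕ} (hp : 1 ≤ p) :
    H (p + g + k + 1) + ∑ i ∈ Ioc 0 (p + k), H i = ∑ i ∈ Ioc 0 (p + g + k), H i + N * H p := by
  rw [hH.succ_eq_of_le (by omega), show p + g + k - g = p + k by omega,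
    show p + k - k = p by omega,
    ← sum_Ioc_consecutive H (Nat.zero_le (p + k)) (show p + k ≤ p + g + k by omega)]
  ring

lemma succ_le_one_add_sum (hH : IsGapPLRS g k N H) (hkg : k ≤ g) (hk2 : k ≤ 2 ^ (g - k))
    (hN : N ≤ 2 ^ (k + 1) - 1) (n : ℕ) : H (n + 1) ≤ 1 + ∑ i ∈ Ioc 0 n, H i := by
  rcases lt_or_ge n (g + k + 1) with hn | hn
  · have := sum_le_sum_of_subset (f := H)
      (Ioc_subset_Ioc_left (Nat.zero_le (n - g)) : Ioc (n - g) n ⊆ Ioc 0 n)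
    rw [hH.succ_eq_of_lt hn]
    omega
  obtain ⟨p, rfl⟩ : ∃ p, n = p + g + k := ⟨n - g - k, by omega⟩
  have hrec := hH.succ_add_sum (p := p) (by omega)
  have hbound := hH.mul_le_sum hkg hk2 (m := p) (by omega)
  have := Nat.mul_le_mul_right (H p) hN
  omega

lemma one_add_sum_lt (hH : IsGapPLRS g k N H) (hk : 1 ≤ k) (hkg : k ≤ g)
    (hN : 2 ^ (k + 1) ≤ N) : 1 + ∑ i ∈ Ioc 0 (g + g + 2), H i < H (g + g + 2 + 1) := by
  -- `H (g - k + 2) = 2 ^ (g - k + 1)` against `1 + H 1 + ⋯ + H (g + 2) = 2 ^ (g + 2) - 1`.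
  have hrec := hH.succ_add_sum (p := g - k + 2) (by omega)
  rw [show g - k + 2 + g + k = g + g + 2 by omega, show g - k + 2 + k = g + 1 + 1 by omega,
    show g - k + 2 = g - k + 1 + 1 by omega, hH.succ_eq_two_pow (n := g - k + 1) (by omega),
    sum_Ioc_succ_top (by omega)] at hrec
  have hsum := hH.sum_add_one_eq_two_pow (n := g + 1) le_rfl
  have hnext : H (g + 1 + 1) + 1 = 2 ^ (g + 1) := by
    simpa using hH.add_mul_two_pow hkg (t := 0) (by omega)
  have hpow : 2 ^ (g + 1) * 2 ≤ N * 2 ^ (g - k + 1) := by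
    calc 2 ^ (g + 1) * 2 = 2 ^ (k + 1) * 2 ^ (g - k + 1) := by
          rw [← pow_succ, ← pow_add]; congr 1; omega
      _ ≤ N * 2 ^ (g - k + 1) := Nat.mul_le_mul_right _ hN
  omega

end IsGapPLRS

theorem stmt6 (g k N : ℕ) (hg : 1 ≤ g) (hk : 1 ≤ k)
    (hgk : k + Nat.clog 2 k ≤ g) (hN : 1 ≤ N) (H : ℕ → ℕ)
    (hH : IsPLRS (g + k + 1)
      (fun i => if i ≤ g then 1 else if i = g + k + 1 then N else 0) H) :
    SeqComplete H ↔ (1 ≤ N ∧ N ≤ 2 ^ (k + 1) - 1) := by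
  have hgap : IsGapPLRS g k N H := hH
  have hkg : k ≤ g := by omega
  have hk2 : k ≤ 2 ^ (g - k) :=
    (Nat.le_pow_clog one_lt_two k).trans (Nat.pow_le_pow_right two_pos (by omega))
  constructor
  · intro hcomp
    refine ⟨hN, ?_⟩
    by_contra! hbig
    exact not_seqComplete_of_one_add_sum_lt (hgap.monotoneOn hg)
      (hgap.one_add_sum_lt hk hkg (by omega)) hcomp
  · rintro ⟨-, hNM⟩
    exact seqComplete_of_succ_le_one_add_sum (hgap.pos hg) (hgap.succ_le_one_add_sum hkg hk2 hNM)
end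

section
/- Let g, k ≥ 1 with k ≤ g ≤ k + ⌈log₂ k⌉, let N ≥ 1, and let {H_n} be the PLRS generated by the coefficients [1, ..., 1, 0, ..., 0, N] consisting of g ones, then k zeros, then N (so L = g + k + 1). Then {H_n} is complete if and only if 1 ≤ N ≤ 2^{k+1} − ⌈k / 2^{g−k}⌉. -/
set_option linter.unusedSectionVars false

open Finset

lemma sum_shift (f : ℕ → ℤ) (n m : ℕ) (h : m ≤ n) :
    ∑ j ∈ Icc 1 m, f (n+1-j) = ∑ i ∈ Ioc (n-m) n, f i := by
  refine Finset.sum_nbij' (fun j => n+1-j) (fun i => n+1-i) ?_ ?_ ?_ ?_ ?_ <;>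
    simp only [mem_Icc, mem_Ioc] <;> intro a ha <;> first | trivial | omega

def T (H : ℕ → ℕ) (n : ℕ) : ℤ := ∑ i ∈ Finset.Ioc 0 n, (H i : ℤ)

lemma T_succ (H : ℕ → ℕ) (a : ℕ) : T H (a+1) = T H a + H (a+1) := by
  rw [T, T, ← Finset.sum_Ioc_succ_top (Nat.zero_le a)]

lemma T_sub (H : ℕ → ℕ) (a b : ℕ) (h : a ≤ b) :
    ∑ i ∈ Ioc a b, (H i : ℤ) = T H b - T H a := by
  rw [T, T, ← Finset.sum_Ioc_consecutive _ (Nat.zero_le a) h]; ring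

variable {g k N : ℕ} {H : ℕ → ℕ}


lemma recA (hH : IsPLRS (g + k + 1)
      (fun i => if i ≤ g then 1 else if i = g + k + 1 then N else 0) H)
    (n : ℕ) (hn : 1 ≤ n) (hnL : n < g + k + 1) :
    (H (n+1) : ℤ) = T H n - T H (n-g) + 1 := by
  obtain ⟨-,-,-,-,hA,-⟩ := hH
  rw [hA n hn hnL]
  push_cast
  have e1 : ∑ j ∈ Icc 1 n,
      ((if j ≤ g then 1 else if j = g + k + 1 then (N:ℤ) else 0)) * (H (n+1-j) : ℤ)
      = ∑ j ∈ Icc 1 (min n g), (H (n+1-j) : ℤ) := by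
    have hsub : Icc 1 (min n g) ⊆ Icc 1 n := by
      intro x hx; simp only [mem_Icc, le_min_iff] at *; omega
    have hzero : ∀ x ∈ Icc 1 n, x ∉ Icc 1 (min n g) →
        (if x ≤ g then (1:ℤ) else if x = g+k+1 then (N:ℤ) else 0) * (H (n+1-x) : ℤ) = 0 := by
      intro x hx hnx; simp only [mem_Icc, not_and, not_le, le_min_iff] at hx hnx
      rw [if_neg (by omega), if_neg (by omega), zero_mul]
    rw [← Finset.sum_subset hsub hzero]
    refine Finset.sum_congr rfl ?_
    intro j hj; simp only [mem_Icc, le_min_iff] at hj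
    rw [if_pos (by omega), one_mul]
  rw [e1, sum_shift (fun i => (H i:ℤ)) n (min n g) (by omega),
    T_sub H _ n (by omega), show n - min n g = n - g by omega]

lemma recB (hH : IsPLRS (g + k + 1)
      (fun i => if i ≤ g then 1 else if i = g + k + 1 then N else 0) H)
    (n : ℕ) (hn : g + k + 1 ≤ n) (hk : 1 ≤ k) :
    (H (n+1) : ℤ) = T H n - T H (n-g) + N * H (n-g-k) := by
  obtain ⟨-,-,-,-,-,hB⟩ := hH
  rw [hB n hn]
  push_cast
  rw [show (g+k+1) = (g+k)+1 from rfl, Finset.sum_Icc_succ_top (by omega)]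
  have e1 : ∑ j ∈ Icc 1 (g+k),
      ((if j ≤ g then 1 else if j = g + k + 1 then (N:ℤ) else 0)) * (H (n+1-j) : ℤ)
      = ∑ j ∈ Icc 1 g, (H (n+1-j) : ℤ) := by
    have hsub : Icc 1 g ⊆ Icc 1 (g+k) := by
      intro x hx; simp only [mem_Icc] at *; omega
    have hzero : ∀ x ∈ Icc 1 (g+k), x ∉ Icc 1 g →
        (if x ≤ g then (1:ℤ) else if x = g+k+1 then (N:ℤ) else 0) * (H (n+1-x) : ℤ) = 0 := by
      intro x hx hnx; simp only [mem_Icc, not_and, not_le] at hx hnx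
      rw [if_neg (by omega), if_neg (by omega), zero_mul]
    rw [← Finset.sum_subset hsub hzero]
    refine Finset.sum_congr rfl ?_
    intro j hj; simp only [mem_Icc] at hj
    rw [if_pos (by omega), one_mul]
  rw [e1, sum_shift (fun i => (H i:ℤ)) n g (by omega), T_sub H _ n (by omega),
    if_neg (by omega), if_pos rfl, show n + 1 - (g+k+1) = n - g - k by omega]

section
variable (hH : IsPLRS (g + k + 1)
      (fun i => if i ≤ g then 1 else if i = g + k + 1 then N else 0) H)
variable (hg : 1 ≤ g) (hk : 1 ≤ k)

include hH hg hk in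
lemma mono_step (n : ℕ) (hn : 1 ≤ n) : (H n : ℤ) ≤ (H (n+1) : ℤ) := by
  have hsingle : (H n : ℤ) ≤ ∑ i ∈ Ioc (n-g) n, (H i : ℤ) := by
    refine Finset.single_le_sum (f := fun i => (H i : ℤ)) (fun i _ => by positivity) ?_
    simp only [mem_Ioc]; omega
  rw [T_sub H _ n (by omega)] at hsingle
  rcases lt_or_ge n (g+k+1) with h | h
  · rw [recA hH n hn h]; linarith
  · have h0 : (0:ℤ) ≤ (N:ℤ) * (H (n-g-k) : ℤ) := by positivity
    rw [recB hH n h hk]; linarith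

include hH hg hk in
lemma Hmono : ∀ a b, 1 ≤ a → a ≤ b → (H a : ℤ) ≤ (H b : ℤ) := by
  intro a b ha hab
  induction b, hab using Nat.le_induction with
  | base => exact le_refl _
  | succ n hn ih => exact le_trans ih (mono_step hH hg hk n (by omega))

include hH hg hk in
lemma Hpos : ∀ n, 1 ≤ n → (1:ℤ) ≤ (H n : ℤ) := by
  intro n hn
  have h1 : H 1 = 1 := hH.2.2.2.1
  have := Hmono hH hg hk 1 n le_rfl hn
  rw [h1] at this; exact_mod_cast this
end

section
variable (hH : IsPLRS (g + k + 1)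
      (fun i => if i ≤ g then 1 else if i = g + k + 1 then N else 0) H)
variable (hg : 1 ≤ g) (hk : 1 ≤ k)

include hH hg hk in
lemma HT1 : ∀ i, i ≤ g + 1 → ((1 ≤ i → (H i : ℤ) = 2^(i-1)) ∧ T H i = 2^i - 1) := by
  intro i
  induction i with
  | zero => intro _; exact ⟨by omega, by simp [T]⟩
  | succ i ih =>
    intro hi
    obtain ⟨ihH, ihT⟩ := ih (by omega)
    have hHi : (H (i+1) : ℤ) = 2^i := by
      rcases Nat.eq_zero_or_pos i with h0 | h0
      · subst h0; rw [hH.2.2.2.1]; norm_num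
      · rw [recA hH i h0 (by omega), ihT, show i - g = 0 by omega]
        have : T H 0 = 0 := by simp [T]
        rw [this]; ring
    refine ⟨fun _ => by rw [show i+1-1 = i from rfl]; exact hHi, ?_⟩
    rw [T_succ, ihT, hHi, pow_succ]; ring

include hH hg hk in
lemma HT2 (hkg : k ≤ g) : ∀ m, m ≤ k →
    ((H (g+1+m) : ℤ) = 2^(g+m) - m * 2^(m-1)) ∧
    (T H (g+1+m) = 2^(g+1+m) - ((m:ℤ)-1) * 2^m - 2) := by
  intro m
  induction m with
  | zero =>
    intro _
    obtain ⟨h1, h2⟩ := HT1 hH hg hk (g+1) le_rfl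
    constructor
    · rw [show g+1+0 = g+1 from rfl, h1 (by omega), show g+1-1 = g from rfl]
      push_cast; ring
    · rw [show g+1+0 = g+1 from rfl, h2]; push_cast; ring
  | succ m ih =>
    intro hm
    obtain ⟨ihH, ihT⟩ := ih (by omega)
    have hT1 : T H (m+1) = 2^(m+1) - 1 := (HT1 hH hg hk (m+1) (by omega)).2
    have key : (H (g+1+m+1) : ℤ) = 2^(g+1+m) - ((m:ℤ)+1) * 2^m := by
      rw [show g+1+m+1 = (g+1+m)+1 from rfl, recA hH (g+1+m) (by omega) (by omega), ihT,
        show g+1+m-g = m+1 by omega, hT1, pow_succ]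
      ring
    constructor
    · rw [show g+1+(m+1) = g+1+m+1 from rfl, key, show g+(m+1) = g+1+m by omega,
        show m+1-1 = m from rfl]
      push_cast; ring
    · rw [show g+1+(m+1) = (g+1+m)+1 from rfl, T_succ,
        show (g+1+m)+1 = g+1+m+1 from rfl, key, ihT, pow_succ, pow_succ]
      push_cast; ring
end



lemma Icc_one (x : ℕ) : Finset.Icc 1 x = Finset.Ioc 0 x := by
  ext i; simp only [mem_Icc, mem_Ioc]; omega

lemma BG_eq (H : ℕ → ℕ) (m : ℕ) : BrownGap H m = 1 + T H (m-1) - H m := by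
  rw [BrownGap, T, Icc_one]

/-- the `D` sequence -/
def DD (k N : ℕ) (H : ℕ → ℕ) (i : ℕ) : ℤ := (H i : ℤ) - N * (H (i-k-1) : ℤ)

section
variable (hH : IsPLRS (g + k + 1)
      (fun i => if i ≤ g then 1 else if i = g + k + 1 then N else 0) H)
variable (hg : 1 ≤ g) (hk : 1 ≤ k) (hkg : k ≤ g)
set_option linter.unusedSectionVars false

include hH hg hk in
lemma BGval1 (m : ℕ) (h1 : 1 ≤ m) (h2 : m ≤ g+1) : BrownGap H m = 0 := by
  rw [BG_eq, (HT1 hH hg hk (m-1) (by omega)).2, (HT1 hH hg hk m h2).1 h1]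
  ring

include hH hg hk hkg in
lemma BGval2 (m : ℕ) (h1 : 1 ≤ m) (h2 : m ≤ k) : BrownGap H (g+1+m) = 2^m - 1 := by
  rw [BG_eq, show g+1+m-1 = g+1+(m-1) by omega, (HT2 hH hg hk hkg (m-1) (by omega)).2,
    (HT2 hH hg hk hkg m h2).1, show g+1+(m-1) = g+(m) by omega]
  have hc : ((m-1 : ℕ) : ℤ) = (m : ℤ) - 1 := by omega
  have hp : (2:ℤ)^m = 2^(m-1) * 2 := by
    rw [← pow_succ]; congr 1; omega
  rw [hc, hp]; ring

include hH hg hk in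
lemma BGstep (n : ℕ) (hn : g+k+1 ≤ n) :
    BrownGap H (n+1) = BrownGap H (n+1-g) + DD k N H (n+1-g) := by
  rw [BG_eq, BG_eq, DD, show n+1-1 = n from rfl, show n+1-g-1 = n-g by omega,
    show n+1-g-k-1 = n-g-k by omega, recB hH n hn hk]
  ring

include hH hg hk hkg in
lemma D0a (j : ℕ) (h1 : 1 ≤ j) (h2 : k+1+j ≤ g+1) :
    DD k N H (k+1+j) = 2^(j-1) * (2^(k+1) - (N:ℤ)) := by
  rw [DD, show k+1+j-k-1 = j by omega,
    (HT1 hH hg hk (k+1+j) h2).1 (by omega),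
    (HT1 hH hg hk j (by omega)).1 h1,
    show k+1+j-1 = (j-1)+(k+1) by omega, pow_add]
  ring

include hH hg hk hkg in
lemma D0b (s : ℕ) (h1 : 1 ≤ s) (h2 : s ≤ k) :
    DD k N H (g+1+s) = 2^(s-1) * (2^(g-k) * (2^(k+1) - (N:ℤ)) - s) := by
  obtain ⟨d, rfl⟩ : ∃ d, g = k + d := ⟨g - k, by omega⟩
  rw [DD, show k+d+1+s-k-1 = d+s by omega,
    (HT2 hH hg hk hkg s h2).1,
    (HT1 hH hg hk (d+s) (by omega)).1 (by omega),
    show k+d-k = d by omega,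
    show d+s-1 = (s-1)+d by omega,
    show k+d+s = ((s-1)+d)+(k+1) by omega, pow_add, pow_add]
  ring

include hH hg hk hkg in
lemma HL1 : (H (g+k+2) : ℤ) = 2^(g+1+k) - ((k:ℤ)+1) * 2^k - 1 + N := by
  have h1 : H 1 = 1 := hH.2.2.2.1
  rw [show g+k+2 = (g+k+1)+1 from rfl, recB hH (g+k+1) le_rfl hk,
    show g+k+1-g-k = 1 by omega, show g+k+1-g = k+1 by omega, h1,
    show g+k+1 = g+1+k by omega, (HT2 hH hg hk hkg k le_rfl).2,
    (HT1 hH hg hk (k+1) (by omega)).2, pow_succ]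
  push_cast; ring

include hH hg hk hkg in
lemma DL1 : DD k N H (g+k+2)
    = 2^k * (1 - (k:ℤ) + 2^(g-k) * (2^(k+1) - N)) - 1 - (2^(k+1) - N) := by
  obtain ⟨d, rfl⟩ : ∃ d, g = k + d := ⟨g - k, by omega⟩
  rw [DD, show k+d+k+2-k-1 = k+d+1 by omega, HL1 hH hg hk hkg,
    (HT1 hH hg hk (k+d+1) le_rfl).1 (by omega),
    show k+d+1-1 = d+k by omega, show k+d-k = d by omega,
    show k+d+1+k = (d+k)+(k+1) by omega, pow_add, pow_add, pow_succ]
  ring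

lemma sum_shift2 (f : ℕ → ℤ) (a b c : ℕ) (h : c ≤ a) :
    ∑ i ∈ Ioc a b, f (i - c) = ∑ i ∈ Ioc (a-c) (b-c), f i := by
  refine Finset.sum_nbij' (fun i => i - c) (fun i => i + c) ?_ ?_ ?_ ?_ ?_ <;>
    simp only [mem_Ioc] <;> intro x hx <;> first | trivial | rfl | omega

include hH hg hk hkg in
lemma Dsum (n : ℕ) (hn : g+k+1 ≤ n) :
    ∑ i ∈ Ioc (n-g) n, DD k N H i
      = (T H n - T H (n-g)) - N * (T H (n-k-1) - T H (n-g-k-1)) := by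
  have e0 : ∀ i ∈ Ioc (n-g) n, DD k N H i = (H i : ℤ) - N * (H (i-(k+1)) : ℤ) := by
    intro i _; rw [DD, show i-k-1 = i-(k+1) by omega]
  rw [Finset.sum_congr rfl e0, Finset.sum_sub_distrib, ← Finset.mul_sum,
    sum_shift2 (fun i => (H i : ℤ)) (n-g) n (k+1) (by omega),
    T_sub H _ n (by omega), T_sub H _ _ (by omega),
    show n-g-(k+1) = n-g-k-1 by omega, show n-(k+1) = n-k-1 by omega]

include hH hg hk hkg in
lemma Dstep1 (n : ℕ) (hn : g+k+1 ≤ n) (hn2 : n ≤ g+2*k+1) :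
    DD k N H (n+1) = (∑ i ∈ Ioc (n-g) n, DD k N H i) + N * ((H (n-g-k) : ℤ) - 1) := by
  rw [Dsum hH hg hk hkg n hn, DD, show n+1-k-1 = (n-k-1)+1 by omega,
    recB hH n hn hk, recA hH (n-k-1) (by omega) (by omega),
    show n-k-1-g = n-g-k-1 by omega]
  ring

include hH hg hk hkg in
lemma Dstep2 (n : ℕ) (hn : g+2*k+2 ≤ n) :
    DD k N H (n+1) = (∑ i ∈ Ioc (n-g) n, DD k N H i) + N * DD k N H (n-g-k) := by
  rw [Dsum hH hg hk hkg n (by omega), DD, DD, show n+1-k-1 = (n-k-1)+1 by omega,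
    recB hH n (by omega) hk, recB hH (n-k-1) (by omega) hk,
    show n-k-1-g = n-g-k-1 by omega, show n-g-k-1-k = n-g-k-k-1 by omega]
  ring

include hH hg hk hkg in
lemma Dpos (hb : (k:ℤ) ≤ 2^(g-k) * (2^(k+1) - N)) :
    ∀ i, k+2 ≤ i → 0 ≤ DD k N H i := by
  have hA : (0:ℤ) ≤ 2^(k+1) - N := by
    by_contra hcon; push_neg at hcon
    have h2 : (0:ℤ) < 2^(g-k) := by positivity
    have hk' : (1:ℤ) ≤ k := by exact_mod_cast hk
    nlinarith
  intro i
  induction i using Nat.strong_induction_on with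
  | _ i ih =>
    intro hi
    rcases le_or_gt i (g+k+1) with hcase | hcase
    · rcases le_or_gt i (g+1) with hc2 | hc2
      · obtain ⟨j, rfl⟩ : ∃ j, i = k+1+j := ⟨i-k-1, by omega⟩
        rw [D0a hH hg hk hkg j (by omega) (by omega)]
        exact mul_nonneg (by positivity) hA
      · obtain ⟨s, rfl⟩ : ∃ s, i = g+1+s := ⟨i-g-1, by omega⟩
        rw [D0b hH hg hk hkg s (by omega) (by omega)]
        refine mul_nonneg (by positivity) ?_
        have hsk : ((s : ℕ):ℤ) ≤ (k:ℤ) := by exact_mod_cast (by omega : s ≤ k)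
        linarith
    · obtain ⟨n, rfl⟩ : ∃ n, i = n+1 := ⟨i-1, by omega⟩
      have hs : 0 ≤ ∑ j ∈ Ioc (n-g) n, DD k N H j := by
        refine Finset.sum_nonneg ?_
        intro j hj; rw [mem_Ioc] at hj
        exact ih j (by omega) (by omega)
      have hN0 : (0:ℤ) ≤ (N:ℤ) := by positivity
      rcases le_or_gt n (g+2*k+1) with hc2 | hc2
      · rw [Dstep1 hH hg hk hkg n (by omega) hc2]
        have hp : (1:ℤ) ≤ H (n-g-k) := Hpos hH hg hk _ (by omega)
        have := mul_nonneg hN0 (by linarith : (0:ℤ) ≤ (H (n-g-k) : ℤ) - 1)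
        linarith
      · rw [Dstep2 hH hg hk hkg n (by omega)]
        have hd : 0 ≤ DD k N H (n-g-k) := ih _ (by omega) (by omega)
        have := mul_nonneg hN0 hd
        linarith

include hH hg hk hkg in
lemma BGpos (hb : (k:ℤ) ≤ 2^(g-k) * (2^(k+1) - N)) :
    ∀ m, 1 ≤ m → 0 ≤ BrownGap H m := by
  intro m
  induction m using Nat.strong_induction_on with
  | _ m ih =>
    intro hm
    rcases le_or_gt m (g+1) with h1 | h1
    · rw [BGval1 hH hg hk m hm h1]
    · rcases le_or_gt m (g+k+1) with h2 | h2
      · obtain ⟨t, rfl⟩ : ∃ t, m = g+1+t := ⟨m-g-1, by omega⟩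
        rw [BGval2 hH hg hk hkg t (by omega) (by omega)]
        have : (1:ℤ) ≤ 2^t := one_le_pow₀ (by norm_num)
        linarith
      · obtain ⟨n, rfl⟩ : ∃ n, m = n+1 := ⟨m-1, by omega⟩
        rw [BGstep hH hg hk n (by omega)]
        have h3 := ih (n+1-g) (by omega) (by omega)
        have h4 := Dpos hH hg hk hkg hb (n+1-g) (by omega)
        linarith

include hH hg hk in
lemma BGL (j : ℕ) (hj1 : 1 ≤ j) (hj2 : j ≤ g) :
    BrownGap H (g+k+1+j) = BrownGap H (k+1+j) + DD k N H (k+1+j) := by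
  have h := BGstep hH hg hk (g+k+j) (by omega)
  rw [show g+k+j+1 = g+k+1+j by omega, show g+k+1+j-g = k+1+j by omega] at h
  exact h

include hH hg hk hkg in
lemma BGL1 : BrownGap H (g+k+2) = 2^(k+1) - (N:ℤ) := by
  have h := BGL hH hg hk 1 le_rfl hg
  rw [show g+k+1+1 = g+k+2 from rfl] at h
  rcases eq_or_lt_of_le hkg with rfl | hlt
  · rw [h, BGval2 hH hg hk le_rfl 1 le_rfl hk, D0b hH hg hk le_rfl 1 le_rfl hk,
      show k-k = 0 by omega]
    norm_num
  · have hb1 := BGval1 hH hg hk (k+1+1) (by omega) (by omega)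
    have hd := D0a hH hg hk hkg 1 le_rfl (by omega)
    rw [show k+1+1 = k+1+1 from rfl] at h
    rw [h, hb1, hd]
    norm_num

include hH hg hk hkg in
lemma BGLg1val :
    BrownGap H (2*g+k+2) = 2^k * (2^(g-k) * (2^(k+1) - (N:ℤ)) - k + 1) - 1 := by
  have h := BGstep hH hg hk (2*g+k+1) (by omega)
  rw [show 2*g+k+1+1 = 2*g+k+2 from rfl, show 2*g+k+1+1-g = g+k+2 by omega] at h
  rw [h, BGL1 hH hg hk hkg, DL1 hH hg hk hkg]
  ring
end


lemma complete_of_BG {H : ℕ → ℕ} (h1 : H 1 = 1)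
    (hpos : ∀ n, 1 ≤ n → 1 ≤ H n)
    (hBG : ∀ n, 1 ≤ n → 0 ≤ BrownGap H n) : SeqComplete H := by
  have key : ∀ n, ∀ m, 1 ≤ m → m ≤ ∑ i ∈ Finset.Icc 1 n, H i →
      ∃ S ⊆ Finset.Icc 1 n, m = ∑ i ∈ S, H i := by
    intro n
    induction n with
    | zero => intro m hm hle; simp at hle; omega
    | succ n ih =>
      intro m hm hle
      rcases le_or_gt m (∑ i ∈ Finset.Icc 1 n, H i) with h | h
      · obtain ⟨S, hS, hsum⟩ := ih m hm h
        exact ⟨S, hS.trans (Finset.Icc_subset_Icc_right (by omega)), hsum⟩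
      · have hU : ∑ i ∈ Finset.Icc 1 (n+1), H i = ∑ i ∈ Finset.Icc 1 n, H i + H (n+1) :=
          Finset.sum_Icc_succ_top (by omega) H
        have hBn : H (n+1) ≤ 1 + ∑ i ∈ Finset.Icc 1 n, H i := by
          have hb := hBG (n+1) (by omega)
          rw [BrownGap, show n+1-1 = n from rfl, ← Nat.cast_sum] at hb
          omega
        rcases eq_or_lt_of_le (show H (n+1) ≤ m by omega) with heq | hlt
        · refine ⟨{n+1}, ?_, by simp [heq]⟩
          simp only [Finset.singleton_subset_iff, Finset.mem_Icc]; omega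
        · obtain ⟨S, hS, hsum⟩ := ih (m - H (n+1)) (by omega) (by omega)
          have hnot : n+1 ∉ S := fun hmem => by
            have := hS hmem; rw [Finset.mem_Icc] at this; omega
          refine ⟨insert (n+1) S, ?_, ?_⟩
          · intro x hx
            rcases Finset.mem_insert.1 hx with rfl | hx'
            · rw [Finset.mem_Icc]; omega
            · exact Finset.Icc_subset_Icc_right (by omega) (hS hx')
          · rw [Finset.sum_insert hnot]; omega
  intro m hm
  have hbound : m ≤ ∑ i ∈ Finset.Icc 1 m, H i := by
    calc m = ∑ _i ∈ Finset.Icc 1 m, 1 := by simp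
    _ ≤ ∑ i ∈ Finset.Icc 1 m, H i := by
        refine Finset.sum_le_sum ?_
        intro i hi; rw [Finset.mem_Icc] at hi; exact hpos i hi.1
  obtain ⟨S, hS, hsum⟩ := key m m hm hbound
  exact ⟨S, fun i hi => (Finset.mem_Icc.1 (hS hi)).1, hsum⟩

lemma BG_of_complete {H : ℕ → ℕ}
    (hmono : ∀ a b, 1 ≤ a → a ≤ b → H a ≤ H b)
    (hc : SeqComplete H) : ∀ n, 1 ≤ n → 0 ≤ BrownGap H n := by
  intro n hn
  by_contra hneg
  push_neg at hneg
  have hU : (∑ i ∈ Finset.Icc 1 (n-1), H i) + 1 < H n := by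
    rw [BrownGap, ← Nat.cast_sum] at hneg
    omega
  obtain ⟨S, hS1, hsum⟩ := hc ((∑ i ∈ Finset.Icc 1 (n-1), H i) + 1) (by omega)
  by_cases hex : ∃ i ∈ S, n ≤ i
  · obtain ⟨i, hiS, hni⟩ := hex
    have h1 : H n ≤ H i := hmono n i hn hni
    have h2 : H i ≤ ∑ j ∈ S, H j :=
      Finset.single_le_sum (f := H) (fun j _ => Nat.zero_le _) hiS
    omega
  · push_neg at hex
    have hsub : S ⊆ Finset.Icc 1 (n-1) := by
      intro i hi; rw [Finset.mem_Icc]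
      exact ⟨hS1 i hi, by have := hex i hi; omega⟩
    have := Finset.sum_le_sum_of_subset (f := H) hsub
    omega

lemma cond_iff (g k N : ℕ) :
    ((N:ℤ) ≤ 2^(k+1) - ⌈(k:ℚ)/2^(g-k)⌉) ↔ ((k:ℤ) ≤ 2^(g-k) * (2^(k+1) - N)) := by
  have h1 : ((N:ℤ) ≤ 2^(k+1) - ⌈(k:ℚ)/2^(g-k)⌉) ↔ (⌈(k:ℚ)/2^(g-k)⌉ ≤ 2^(k+1) - N) := by
    constructor <;> intro h <;> linarith
  rw [h1, Int.ceil_le, div_le_iff₀ (by positivity)]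
  constructor
  · intro h
    have h2 : ((k:ℤ):ℚ) ≤ ((2^(g-k) * (2^(k+1) - N) : ℤ) : ℚ) := by
      push_cast at h ⊢; linarith
    exact_mod_cast h2
  · intro h
    have h2 : ((k:ℤ):ℚ) ≤ ((2^(g-k) * (2^(k+1) - N) : ℤ) : ℚ) := by exact_mod_cast h
    push_cast at h2 ⊢; linarith

theorem stmt7 (g k N : ℕ) (hg : 1 ≤ g) (hk : 1 ≤ k)
    (hkg : k ≤ g) (hgk : g ≤ k + Nat.clog 2 k) (hN : 1 ≤ N) (H : ℕ → ℕ)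
    (hH : IsPLRS (g + k + 1)
      (fun i => if i ≤ g then 1 else if i = g + k + 1 then N else 0) H) :
    SeqComplete H ↔
      (1 ≤ N ∧ (N : ℤ) ≤ 2 ^ (k + 1) - ⌈(k : ℚ) / 2 ^ (g - k)⌉) := by
  have hmonoZ := Hmono hH hg hk
  have hmono : ∀ a b, 1 ≤ a → a ≤ b → H a ≤ H b := fun a b ha hab => by
    exact_mod_cast hmonoZ a b ha hab
  constructor
  · intro hc
    refine ⟨hN, ?_⟩
    rw [cond_iff]
    by_contra hcon
    push_neg at hcon
    have hBGall := BG_of_complete hmono hc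
    set e : ℤ := 2^(g-k) * (2^(k+1) - (N:ℤ)) with he
    rcases lt_or_ge e 0 with h0 | h0
    · have hval : BrownGap H (g+k+1+(g-k+1)) = e := by
        rw [BGL hH hg hk (g-k+1) (by omega) (by omega),
          show k+1+(g-k+1) = g+1+1 by omega,
          BGval2 hH hg hk hkg 1 le_rfl hk, D0b hH hg hk hkg 1 le_rfl hk, ← he]
        norm_num
      have h2 := hBGall (g+k+1+(g-k+1)) (by omega)
      linarith
    · rcases lt_or_ge e ((k:ℤ)-1) with h1 | h1
      · set s : ℕ := e.toNat + 2 with hs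
        have hsZ : ((s:ℕ):ℤ) = e + 2 := by
          push_cast [hs, Int.toNat_of_nonneg h0]; ring
        have hsk : s ≤ k := by omega
        have hval : BrownGap H (g+k+1+(g-k+s)) = -1 := by
          rw [BGL hH hg hk (g-k+s) (by omega) (by omega),
            show k+1+(g-k+s) = g+1+s by omega,
            BGval2 hH hg hk hkg s (by omega) hsk,
            D0b hH hg hk hkg s (by omega) hsk, ← he]
          have hp : (2:ℤ)^s = 2^(s-1) * 2 := by
            conv_lhs => rw [show s = (s-1)+1 by omega]
            rw [pow_succ]
          rw [hp, hsZ]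
          ring
        have h2 := hBGall (g+k+1+(g-k+s)) (by omega)
        linarith
      · have he2 : e = (k:ℤ) - 1 := by omega
        have hval := BGLg1val hH hg hk hkg
        rw [← he, he2] at hval
        have hval2 : BrownGap H (2*g+k+2) = -1 := by rw [hval]; ring
        have h2 := hBGall (2*g+k+2) (by omega)
        linarith
  · rintro ⟨-, hcond⟩
    rw [cond_iff] at hcond
    exact complete_of_BG hH.2.2.2.1 (fun n hn => by exact_mod_cast Hpos hH hg hk n hn)
      (BGpos hH hg hk hkg hcond)
end

section
/- Let {H_n} be the PLRS generated by coefficients [c_1, ..., c_L]. If the Brown's gaps satisfy B_{H,n} ≥ 0 for all n < L and B_{H,n} > 0 for all L ≤ n ≤ 2L − 1, then {H_n} is complete. -/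
private def Ssum (H : ℕ → ℕ) (n : ℕ) : ℕ := ∑ i ∈ Finset.Icc 1 n, H i

private lemma Ssum_zero (H : ℕ → ℕ) : Ssum H 0 = 0 := by simp [Ssum]

private lemma Ssum_succ (H : ℕ → ℕ) (n : ℕ) :
    Ssum H (n + 1) = Ssum H n + H (n + 1) := by
  unfold Ssum
  exact Finset.sum_Icc_succ_top (by omega) H

private lemma brown_eq (H : ℕ → ℕ) (n : ℕ) :
    BrownGap H (n + 1) = 1 + (Ssum H n : ℤ) - (H (n + 1) : ℤ) := by
  unfold BrownGap Ssum
  push_cast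
  simp

theorem stmt15 (L : ℕ) (c H : ℕ → ℕ) (hH : IsPLRS L c H)
    (h1 : ∀ n, 1 ≤ n → n < L → 0 ≤ BrownGap H n)
    (h2 : ∀ n, L ≤ n → n ≤ 2 * L - 1 → 0 < BrownGap H n) :
    SeqComplete H := by
  obtain ⟨hL, hc1, hcL, hH1, hinit, hrec⟩ := hH
  -- The case L = 1 is vacuous: BrownGap H 1 = 0 contradicts h2.
  rcases Nat.lt_or_ge L 2 with hL1 | hL2
  · exfalso
    have hLe : L = 1 := by omega
    have := h2 1 (by omega) (by omega)
    simp [BrownGap, hH1, show Finset.Icc 1 0 = (∅ : Finset ℕ) from Finset.Icc_eq_empty (by omega)] at this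
  -- positivity of H
  have hposH : ∀ n, 1 ≤ n → 1 ≤ H n := by
    intro n
    induction n using Nat.strong_induction_on with
    | _ n ih =>
      intro hn
      match n, hn with
      | 1, _ => omega
      | (m+2), _ =>
        rcases Nat.lt_or_ge (m+1) L with hm | hm
        · rw [hinit (m+1) (by omega) hm]; omega
        · rw [hrec (m+1) hm]
          calc (1:ℕ) ≤ c 1 * H (m+1+1-1) := by
                have : H (m+1) ≥ 1 := ih (m+1) (by omega) (by omega)
                simp only [Nat.add_sub_cancel]
                exact Nat.one_le_iff_ne_zero.mpr (by positivity)
            _ ≤ ∑ j ∈ Finset.Icc 1 L, c j * H (m+1+1-j) := by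
                apply Finset.single_le_sum (f := fun j => c j * H (m+1+1-j))
                  (fun i _ => Nat.zero_le _)
                simp [Finset.mem_Icc]; omega
  -- the partial-sum identity
  have hP : ∀ n, 1 ≤ n →
      Ssum H n = (∑ j ∈ Finset.Icc 1 (min L n), c j * Ssum H (n - j)) + min L n := by
    intro n hn
    induction n, hn using Nat.le_induction with
    | base =>
      rw [show min L 1 = 1 by omega]
      rw [show Ssum H 1 = 1 by simp [Ssum, hH1]]
      simp [Ssum_zero]
    | succ n hn ih =>
      rcases Nat.lt_or_ge n L with hnL | hnL
      · -- n < L, so n+1 ≤ L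
        rw [show min L (n+1) = n + 1 by omega]
        rw [show min L n = n by omega] at ih
        rw [Finset.sum_Icc_succ_top (by omega : 1 ≤ n + 1)]
        have hzero : c (n+1) * Ssum H (n + 1 - (n+1)) = 0 := by
          simp [Ssum_zero]
        rw [hzero]
        have hsplit : ∑ j ∈ Finset.Icc 1 n, c j * Ssum H (n + 1 - j)
            = (∑ j ∈ Finset.Icc 1 n, c j * Ssum H (n - j))
              + ∑ j ∈ Finset.Icc 1 n, c j * H (n + 1 - j) := by
          rw [← Finset.sum_add_distrib]
          apply Finset.sum_congr rfl
          intro j hj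
          have hj' : 1 ≤ j ∧ j ≤ n := Finset.mem_Icc.mp hj
          rw [show n + 1 - j = (n - j) + 1 by omega, Ssum_succ]
          ring
        rw [hsplit, Ssum_succ, ih, hinit n hn hnL]
        omega
      · -- L ≤ n
        rw [show min L (n+1) = L by omega]
        rw [show min L n = L by omega] at ih
        have hsplit : ∑ j ∈ Finset.Icc 1 L, c j * Ssum H (n + 1 - j)
            = (∑ j ∈ Finset.Icc 1 L, c j * Ssum H (n - j))
              + ∑ j ∈ Finset.Icc 1 L, c j * H (n + 1 - j) := by
          rw [← Finset.sum_add_distrib]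
          apply Finset.sum_congr rfl
          intro j hj
          have hj' : 1 ≤ j ∧ j ≤ L := Finset.mem_Icc.mp hj
          rw [show n + 1 - j = (n - j) + 1 by omega, Ssum_succ]
          ring
        rw [hsplit, Ssum_succ, ih, hrec n hnL]
        omega
  -- the recurrence for Brown's gaps
  have hBrec : ∀ n, L ≤ n →
      BrownGap H (n+1) - 1
        = (∑ j ∈ Finset.Icc 1 L, (c j : ℤ) * (BrownGap H (n+1-j) - 1)) + L := by
    intro n hn
    have hn1 : 1 ≤ n := by omega
    have hS := hP n hn1
    rw [show min L n = L by omega] at hS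
    have hterm : ∀ j ∈ Finset.Icc 1 L, (c j : ℤ) * (BrownGap H (n+1-j) - 1)
        = (c j : ℤ) * (Ssum H (n-j) : ℤ) - (c j : ℤ) * (H (n+1-j) : ℤ) := by
      intro j hj
      have hj' : 1 ≤ j ∧ j ≤ L := Finset.mem_Icc.mp hj
      rw [show n + 1 - j = (n - j) + 1 by omega, brown_eq]
      ring
    rw [Finset.sum_congr rfl hterm, Finset.sum_sub_distrib]
    rw [brown_eq]
    have hSZ : (Ssum H n : ℤ)
        = (∑ j ∈ Finset.Icc 1 L, (c j : ℤ) * (Ssum H (n-j) : ℤ)) + L := by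
      exact_mod_cast congrArg (Nat.cast : ℕ → ℤ) hS
    have hHZ : (H (n+1) : ℤ)
        = ∑ j ∈ Finset.Icc 1 L, (c j : ℤ) * (H (n+1-j) : ℤ) := by
      exact_mod_cast congrArg (Nat.cast : ℕ → ℤ) (hrec n hn)
    rw [hSZ, hHZ]
    ring
  -- positivity of Brown's gaps from index L on
  have hBpos : ∀ n, L ≤ n → 1 ≤ BrownGap H n := by
    intro n
    induction n using Nat.strong_induction_on with
    | _ n ih =>
      intro hn
      rcases Nat.lt_or_ge n (2 * L) with hn2 | hn2
      · have := h2 n hn (by omega)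
        omega
      · -- n ≥ 2L ≥ L + 2
        obtain ⟨m, rfl⟩ : ∃ m, n = m + 1 := ⟨n - 1, by omega⟩
        have hm : L ≤ m := by omega
        have hrecB := hBrec m hm
        have hterm : ∀ j ∈ Finset.Icc 1 L, 0 ≤ (c j : ℤ) * (BrownGap H (m+1-j) - 1) := by
          intro j hj
          have hj' : 1 ≤ j ∧ j ≤ L := Finset.mem_Icc.mp hj
          have hidx : L ≤ m + 1 - j ∧ m + 1 - j < m + 1 := by omega
          have := ih (m + 1 - j) hidx.2 hidx.1
          have hc : (0:ℤ) ≤ (c j : ℤ) := Int.natCast_nonneg _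
          nlinarith
        have hsum : 0 ≤ ∑ j ∈ Finset.Icc 1 L, (c j : ℤ) * (BrownGap H (m+1-j) - 1) :=
          Finset.sum_nonneg hterm
        have hLZ : (0:ℤ) ≤ (L:ℤ) := Int.natCast_nonneg _
        omega
  -- nonnegativity of all Brown's gaps (used via the bound on H (n+1))
  have hBnd : ∀ n, 1 ≤ n → H (n+1) ≤ 1 + Ssum H n := by
    intro n hn
    have hB : 0 ≤ BrownGap H (n+1) := by
      rcases Nat.lt_or_ge (n+1) L with h | h
      · exact h1 (n+1) (by omega) h
      · have := hBpos (n+1) h; omega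
    rw [brown_eq] at hB
    have : (H (n+1) : ℤ) ≤ 1 + (Ssum H n : ℤ) := by linarith
    exact_mod_cast this
  -- partial sums grow at least linearly
  have hSgrow : ∀ n, n ≤ Ssum H n := by
    intro n
    induction n with
    | zero => simp [Ssum_zero]
    | succ k ihk =>
      rw [Ssum_succ]
      have := hposH (k+1) (by omega)
      omega
  -- key completeness induction
  have key : ∀ n, 1 ≤ n → ∀ m, 1 ≤ m → m ≤ Ssum H n →
      ∃ T : Finset ℕ, (∀ i ∈ T, 1 ≤ i ∧ i ≤ n) ∧ m = ∑ i ∈ T, H i := by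
    intro n hn
    induction n, hn using Nat.le_induction with
    | base =>
      intro m hm1 hm2
      have hS1 : Ssum H 1 = 1 := by simp [Ssum, hH1]
      have : m = 1 := by omega
      refine ⟨{1}, by simp, ?_⟩
      simp [this, hH1]
    | succ n hn ih =>
      intro m hm1 hm2
      rw [Ssum_succ] at hm2
      rcases le_or_gt m (Ssum H n) with hle | hgt
      · obtain ⟨T, hT1, hT2⟩ := ih m hm1 hle
        exact ⟨T, fun i hi => ⟨(hT1 i hi).1, by have := (hT1 i hi).2; omega⟩, hT2⟩
      · have hHle : H (n+1) ≤ m := by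
          have := hBnd n hn
          omega
        rcases Nat.eq_or_lt_of_le hHle with heq | hlt
        · refine ⟨{n+1}, by simp, ?_⟩
          simp [← heq]
        · -- 1 ≤ m - H (n+1) ≤ Ssum H n
          obtain ⟨T, hT1, hT2⟩ := ih (m - H (n+1)) (by omega) (by omega)
          have hnotmem : n + 1 ∉ T := by
            intro hmem
            have := (hT1 _ hmem).2
            omega
          refine ⟨insert (n+1) T, ?_, ?_⟩
          · intro i hi
            rcases Finset.mem_insert.mp hi with rfl | hi'
            · omega
            · have := hT1 i hi'; omega
          · rw [Finset.sum_insert hnotmem, ← hT2]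
            omega
  -- conclude
  intro m hm
  obtain ⟨T, hT1, hT2⟩ := key m (by omega) m (by omega) (hSgrow m)
  exact ⟨T, fun i hi => (hT1 i hi).1, hT2⟩
end

section
/- Let k ≥ 0, let N = ⌈(k+2)(k+3)/4⌉, and let {H_n} be the PLRS generated by the coefficients [1, 0, ..., 0, N] with k zeros between the initial 1 and the final coefficient N (so L = k + 2). Then for all n ≥ k + 3, (N − 2)·H_{n−k−1} ≤ H_{n−1} + H_{n−2} + ... + H_{n−k}, where the right-hand side is the sum of the k terms H_{n−1}, ..., H_{n−k} (the empty sum 0 when k = 0). -/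
/-- Shifting a sum over `Icc 1 K` by one. -/
lemma shiftSum19 (f : ℕ → ℤ) : ∀ K : ℕ,
    (∑ j ∈ Finset.Icc 1 K, f (j + 1)) + f 1 =
    (∑ j ∈ Finset.Icc 1 K, f j) + f (K + 1) := by
  intro K
  induction K with
  | zero => simp
  | succ K ih =>
    rw [Finset.sum_Icc_succ_top (by omega : 1 ≤ K + 1),
        Finset.sum_Icc_succ_top (by omega : 1 ≤ K + 1)]
    linarith

/-- Gauss sum over `Icc 1 K`. -/
lemma gaussSum19 : ∀ K : ℕ, 2 * (∑ j ∈ Finset.Icc 1 K, (j : ℤ)) = K * (K + 1) := by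
  intro K
  induction K with
  | zero => simp
  | succ K ih =>
    rw [Finset.sum_Icc_succ_top (by omega : 1 ≤ K + 1)]
    push_cast
    nlinarith [ih]

theorem stmt19 (k N : ℕ)
    (hN : (N : ℤ) = ⌈(((k : ℚ) + 2) * ((k : ℚ) + 3)) / 4⌉)
    (H : ℕ → ℕ)
    (hH : IsPLRS (k + 2) (fun i => if i = 1 then 1 else if i = k + 2 then N else 0) H) :
    ∀ n, k + 3 ≤ n →
      (N - 2) * H (n - k - 1) ≤ ∑ j ∈ Finset.Icc 1 k, H (n - j) := by
  obtain ⟨-, -, -, hH1, hrecA, hrecB⟩ := hH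
  -- bounds on N
  have hk0 : (0:ℤ) ≤ (k:ℤ) := Int.natCast_nonneg k
  have hkk : (0:ℤ) ≤ (k:ℤ) * k := mul_nonneg hk0 hk0
  have hlb : (k:ℤ) * k + 5 * k + 6 ≤ 4 * N := by
    have h1 : (((k:ℚ) + 2) * ((k:ℚ) + 3)) / 4 ≤ ((N : ℕ) : ℚ) := by
      have h := Int.le_ceil ((((k:ℚ) + 2) * ((k:ℚ) + 3)) / 4)
      rw [← hN] at h
      exact_mod_cast h
    have h2 : (k:ℚ) * k + 5 * k + 6 ≤ 4 * (N:ℚ) := by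
      nlinarith [h1]
    exact_mod_cast h2
  have hub : 4 * (N:ℤ) ≤ (k:ℤ) * k + 5 * k + 8 := by
    have h1 : ((N : ℕ) : ℚ) < (((k:ℚ) + 2) * ((k:ℚ) + 3)) / 4 + 1 := by
      have h := Int.ceil_lt_add_one ((((k:ℚ) + 2) * ((k:ℚ) + 3)) / 4)
      rw [← hN] at h
      exact_mod_cast h
    have h2 : 4 * (N:ℚ) < (k:ℚ) * k + 5 * k + 10 := by
      nlinarith [h1]
    have h3 : 4 * (N:ℤ) < (k:ℤ) * k + 5 * k + 10 := by exact_mod_cast h2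
    obtain ⟨t, ht⟩ : ∃ t : ℤ, (k:ℤ) * k + 5 * k = 2 * t := by
      rcases Int.even_or_odd (k:ℤ) with ⟨c, hc⟩ | ⟨c, hc⟩
      · exact ⟨2 * c * c + 5 * c, by rw [hc]; ring⟩
      · exact ⟨2 * c * c + 7 * c + 3, by rw [hc]; ring⟩
    rw [ht] at h3 ⊢
    omega
  have h2N : 2 ≤ N := by
    have h6 : (6:ℤ) ≤ 4 * N := by nlinarith
    omega
  -- simplified recurrences
  have hstep1 : ∀ n, 1 ≤ n → n < k + 2 → H (n + 1) = H n + 1 := by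
    intro n h1 h2
    rw [hrecA n h1 h2]
    congr 1
    rw [Finset.sum_eq_single 1]
    · simp
    · intro b hb hb1
      simp only [Finset.mem_Icc] at hb
      have hbk : b ≠ k + 2 := by omega
      simp [hb1, hbk]
    · intro h
      exact absurd (Finset.mem_Icc.mpr ⟨le_rfl, h1⟩) h
  have hstep2 : ∀ n, k + 2 ≤ n → H (n + 1) = H n + N * H (n - k - 1) := by
    intro n hn
    rw [hrecB n hn]
    have hcongr : ∀ j ∈ Finset.Icc 1 (k + 2),
        (if j = 1 then 1 else if j = k + 2 then N else 0) * H (n + 1 - j)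
          = (if j = 1 then H n else 0)
            + (if j = k + 2 then N * H (n - k - 1) else 0) := by
      intro j hj
      simp only [Finset.mem_Icc] at hj
      by_cases h1 : j = 1
      · subst h1
        simp [(by omega : ¬ (1 = k + 2))]
      · by_cases h2 : j = k + 2
        · subst h2
          rw [if_neg h1, if_pos rfl, if_neg h1, if_pos rfl,
              (by omega : n + 1 - (k + 2) = n - k - 1)]
          omega
        · simp [h1, h2]
    rw [Finset.sum_congr rfl hcongr, Finset.sum_add_distrib,
        Finset.sum_ite_eq' (Finset.Icc 1 (k + 2)) 1 (fun _ => H n),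
        Finset.sum_ite_eq' (Finset.Icc 1 (k + 2)) (k + 2) (fun _ => N * H (n - k - 1)),
        if_pos (Finset.mem_Icc.mpr ⟨le_rfl, by omega⟩),
        if_pos (Finset.mem_Icc.mpr ⟨by omega, le_rfl⟩)]
  -- H is linear on the initial segment
  have Hlin : ∀ n, 1 ≤ n → n ≤ k + 2 → H n = n := by
    intro n
    induction n with
    | zero => intro h1 _; exact absurd h1 (by omega)
    | succ p ih =>
      intro h1 h2
      rcases Nat.eq_zero_or_pos p with hp | hp
      · subst hp; exact hH1
      · rw [hstep1 p hp (by omega), ih hp (by omega)]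
  -- monotonicity
  have hmono : ∀ a b, 1 ≤ a → a ≤ b → H a ≤ H b := by
    intro a b ha hab
    induction b, hab using Nat.le_induction with
    | base => exact le_rfl
    | succ b hb ih =>
      refine le_trans ih ?_
      rcases lt_or_ge b (k + 2) with h | h
      · rw [hstep1 b (by omega) h]; omega
      · rw [hstep2 b h]; omega
  have hk3 : H (k + 3) = k + 2 + N := by
    rw [show k + 3 = (k + 2) + 1 from rfl, hstep2 (k + 2) le_rfl,
        Hlin (k + 2) (by omega) le_rfl, (by omega : k + 2 - k - 1 = 1), hH1]
    ring
  -- the key estimate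
  have key : ∀ m, 1 ≤ m →
      ((N:ℤ) - 2) * (H m : ℤ) ≤ ∑ j ∈ Finset.Icc 1 k, (H (m + j) : ℤ) := by
    intro m
    induction m using Nat.strong_induction_on with
    | _ m ih =>
    intro hm
    by_cases hm1 : m = 1
    · subst hm1
      rw [hH1]
      have hsum : ∑ j ∈ Finset.Icc 1 k, (H (1 + j) : ℤ)
          = ∑ j ∈ Finset.Icc 1 k, ((j : ℤ) + 1) := by
        refine Finset.sum_congr rfl fun j hj => ?_
        simp only [Finset.mem_Icc] at hj
        rw [Hlin (1 + j) (by omega) (by omega)]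
        push_cast; ring
      rw [hsum, Finset.sum_add_distrib, Finset.sum_const, Nat.card_Icc]
      have hg := gaussSum19 k
      simp only [nsmul_eq_mul, mul_one, Nat.add_sub_cancel]
      push_cast
      linarith
    · by_cases hm2 : m = 2
      · subst hm2
        rw [Hlin 2 (by omega) (by omega)]
        have hsum : ∑ j ∈ Finset.Icc 1 k, (H (2 + j) : ℤ)
            = ∑ j ∈ Finset.Icc 1 k, ((j : ℤ) + 2) := by
          refine Finset.sum_congr rfl fun j hj => ?_
          simp only [Finset.mem_Icc] at hj
          rw [Hlin (2 + j) (by omega) (by omega)]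
          push_cast; ring
        rw [hsum, Finset.sum_add_distrib, Finset.sum_const, Nat.card_Icc]
        have hg := gaussSum19 k
        simp only [nsmul_eq_mul, Nat.add_sub_cancel]
        push_cast
        linarith
      · by_cases hmid : m ≤ k + 2
        · -- 3 ≤ m ≤ k + 2
          obtain ⟨a, rfl⟩ : ∃ a, m = a + 1 := ⟨m - 1, by omega⟩
          have ha2 : 2 ≤ a := by omega
          have hak : a ≤ k + 1 := by omega
          have iha := ih a (by omega) (by omega)
          have hshift := shiftSum19 (fun j => (H (a + j) : ℤ)) k
          have hre : ∑ j ∈ Finset.Icc 1 k, (H (a + 1 + j) : ℤ)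
              = ∑ j ∈ Finset.Icc 1 k, (H (a + (j + 1)) : ℤ) :=
            Finset.sum_congr rfl fun j _ => by
              rw [show a + 1 + j = a + (j + 1) by omega]
          have hv1 : H (a + 1) = a + 1 := Hlin (a + 1) (by omega) (by omega)
          have hva : H a = a := Hlin a (by omega) (by omega)
          have hmb : H (k + 3) ≤ H (a + (k + 1)) :=
            hmono (k + 3) (a + (k + 1)) (by omega) (by omega)
          rw [hk3] at hmb
          have hmb' : ((k:ℤ) + 2 + N) ≤ (H (a + (k + 1)) : ℤ) := by exact_mod_cast hmb
          rw [hre, hv1]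
          rw [hva] at iha
          rw [hv1] at hshift
          have hakZ : (a : ℤ) ≤ (k : ℤ) + 1 := by exact_mod_cast hak
          push_cast at iha hshift ⊢
          linarith
        · -- m ≥ k + 3
          obtain ⟨a, rfl⟩ : ∃ a, m = a + 1 := ⟨m - 1, by omega⟩
          have hak : k + 2 ≤ a := by omega
          have iha := ih a (by omega) (by omega)
          have ihb := ih (a - k - 1) (by omega) (by omega)
          have hterm : ∀ j ∈ Finset.Icc 1 k, (H (a + 1 + j) : ℤ)
              = (H (a + j) : ℤ) + (N : ℤ) * (H (a - k - 1 + j) : ℤ) := by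
            intro j hj
            simp only [Finset.mem_Icc] at hj
            have h := hstep2 (a + j) (by omega)
            rw [show a + 1 + j = a + j + 1 by omega, h,
                show a + j - k - 1 = a - k - 1 + j by omega]
            push_cast; ring
          rw [Finset.sum_congr rfl hterm, Finset.sum_add_distrib, ← Finset.mul_sum,
              hstep2 a (by omega)]
          have hN0 : (0:ℤ) ≤ (N:ℤ) := Int.natCast_nonneg N
          have hmul := mul_le_mul_of_nonneg_left ihb hN0
          push_cast
          nlinarith [iha, hmul]
  -- conclude
  intro n hn
  have reind : ∑ j ∈ Finset.Icc 1 k, H (n - j) = ∑ j ∈ Finset.Icc 1 k, H (n - k - 1 + j) := by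
    rw [← Finset.Ico_add_one_right_eq_Icc, Finset.sum_Ico_eq_sum_range, Finset.sum_Ico_eq_sum_range]
    simp only [Nat.add_sub_cancel]
    have e1 : ∑ j ∈ Finset.range k, H (n - (1 + j))
        = ∑ j ∈ Finset.range k, H (n - k + (k - 1 - j)) := by
      apply Finset.sum_congr rfl
      intro j hj
      simp only [Finset.mem_range] at hj
      congr 1
      omega
    rw [e1, Finset.sum_range_reflect (fun i => H (n - k + i)) k]
    apply Finset.sum_congr rfl
    intro j hj
    simp only [Finset.mem_range] at hj
    congr 1
    omega
  rw [reind]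
  have hkey := key (n - k - 1) (by omega)
  zify [h2N]
  push_cast at hkey
  exact hkey
end
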